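/- arXiv:0812.3427 — 8 statements merged into one kernel-verified Lean document; each statement's English description precedes it below -/
import Mathlib

section
/- Let n ≥ 2, a > 0, and let f : ℝ → ℂ be infinitely differentiable on (-a, a) and satisfy f⁽ⁿ⁾(x) + b_{n-1}(x)·f⁽ⁿ⁻¹⁾(x) + ⋯ + b_0(x)·f(x) = 0 for all x ∈ (-a, a) \ {0}, where b_k : ℝ → ℂ. Assume f(0) = f'(0) = ⋯ = f⁽ⁿ⁻¹⁾(0) = 0, and assume that for each k = 0, 1, …, n-1, |x|^{n-k}·|b_k(x)| → 0 as x → 0 (i.e., |b_k(x)| = o(1/|x|^{n-k})). Then there exists δ > 0 such that f ≡ 0 on [-δ, δ]. -/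
open Filter Topology

/-!
Let `M` be the maximum of `‖f⁽ⁿ⁾‖` on a small interval `[-δ, δ]`. Since `f` and its first
`n - 1` derivatives vanish at `0`, repeated mean value estimates give
`‖f⁽ᵏ⁾(x)‖ ≤ M |x|^(n-k)`, and the equation then yields
`‖f⁽ⁿ⁾(x)‖ ≤ M ∑ₖ |x|^(n-k) ‖bₖ(x)‖ ≤ M / 2` once `δ` is small enough. Hence `M ≤ M / 2`,
so `M = 0`, and the same estimate with `k = 0` shows `f = 0` on `[-δ, δ]`.
-/

section TaylorBound

variable {E : Type*} [NormedAddCommGroup E] [NormedSpace ℝ E]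

theorem norm_le_mul_abs_pow_succ_of_norm_deriv_le {g : ℝ → E} {s : Set ℝ} (hs : Convex ℝ s)
    (h0 : 0 ∈ s) (hg0 : g 0 = 0) (hg : ∀ x ∈ s, DifferentiableAt ℝ g x) {C : ℝ} (hC : 0 ≤ C)
    {m : ℕ} (hg' : ∀ x ∈ s, ‖deriv g x‖ ≤ C * |x| ^ m) {x : ℝ} (hx : x ∈ s) :
    ‖g x‖ ≤ C * |x| ^ (m + 1) := by
  -- Mean value theorem on `s ∩ [-|x|, |x|]`, where `|y| ^ m ≤ |x| ^ m`.
  have hbound : ∀ y ∈ s ∩ Metric.closedBall 0 |x|, ‖deriv g y‖ ≤ C * |x| ^ m := by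
    rintro y ⟨hys, hyx⟩
    rw [mem_closedBall_zero_iff, Real.norm_eq_abs] at hyx
    exact (hg' y hys).trans (by gcongr)
  have hmvt := (hs.inter (convex_closedBall 0 |x|)).norm_image_sub_le_of_norm_deriv_le
    (fun y hy => hg y hy.1) hbound ⟨h0, by simp⟩ ⟨hx, by simp⟩
  rw [hg0, sub_zero, sub_zero, Real.norm_eq_abs] at hmvt
  rwa [pow_succ, ← mul_assoc]

theorem norm_iteratedDeriv_le_mul_abs_pow {f : ℝ → E} {s : Set ℝ} (hs : Convex ℝ s)
    (h0 : 0 ∈ s) {n : ℕ} (hf : ∀ k < n, ∀ x ∈ s, DifferentiableAt ℝ (iteratedDeriv k f) x)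
    (hinit : ∀ k < n, iteratedDeriv k f 0 = 0) {M : ℝ}
    (hM : ∀ x ∈ s, ‖iteratedDeriv n f x‖ ≤ M) {k : ℕ} (hk : k ≤ n) {x : ℝ} (hx : x ∈ s) :
    ‖iteratedDeriv k f x‖ ≤ M * |x| ^ (n - k) := by
  have hM0 : 0 ≤ M := (norm_nonneg _).trans (hM 0 h0)
  suffices ∀ m ≤ n, ∀ x ∈ s, ‖iteratedDeriv (n - m) f x‖ ≤ M * |x| ^ m by
    simpa [Nat.sub_sub_self hk] using this (n - k) (Nat.sub_le n k) x hx
  intro m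
  induction m with
  | zero => simpa using hM
  | succ m ih =>
    intro hm y hy
    have hderiv := ih (by omega)
    rw [show n - m = n - (m + 1) + 1 by omega, iteratedDeriv_succ] at hderiv
    exact norm_le_mul_abs_pow_succ_of_norm_deriv_le hs h0 (hinit _ (by omega))
      (hf _ (by omega)) hM0 hderiv hy

end TaylorBound

section LinearODE

variable {R : Type*} [NormedRing R] [NormedAlgebra ℝ R]

theorem norm_iteratedDeriv_le_of_linearODE {f : ℝ → R} {b : ℕ → ℝ → R} {n : ℕ} {x M : ℝ}
    (hode : iteratedDeriv n f x + ∑ k ∈ Finset.range n, b k x * iteratedDeriv k f x = 0)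
    (hf : ∀ k < n, ‖iteratedDeriv k f x‖ ≤ M * |x| ^ (n - k)) :
    ‖iteratedDeriv n f x‖ ≤ M * ∑ k ∈ Finset.range n, |x| ^ (n - k) * ‖b k x‖ := by
  rw [eq_neg_of_add_eq_zero_left hode, norm_neg, Finset.mul_sum]
  refine (norm_sum_le _ _).trans (Finset.sum_le_sum fun k hk => ?_)
  calc ‖b k x * iteratedDeriv k f x‖ ≤ ‖b k x‖ * (M * |x| ^ (n - k)) :=
        (norm_mul_le _ _).trans (by gcongr; exact hf k (Finset.mem_range.mp hk))
    _ = M * (|x| ^ (n - k) * ‖b k x‖) := by ring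

theorem eqOn_zero_of_linearODE {f : ℝ → R} {b : ℕ → ℝ → R} {n : ℕ} {s : Set ℝ}
    (hs : Convex ℝ s) (hsc : IsCompact s) (hs0 : s ∈ 𝓝 0)
    (hf : ∀ k ≤ n, ∀ x ∈ s, DifferentiableAt ℝ (iteratedDeriv k f) x)
    (hode : ∀ x ∈ s, x ≠ 0 →
      iteratedDeriv n f x + ∑ k ∈ Finset.range n, b k x * iteratedDeriv k f x = 0)
    (hinit : ∀ k < n, iteratedDeriv k f 0 = 0)
    (hsmall : ∀ x ∈ s, x ≠ 0 → ∑ k ∈ Finset.range n, |x| ^ (n - k) * ‖b k x‖ ≤ 1 / 2) :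
    Set.EqOn f 0 s := by
  have h0 : (0 : ℝ) ∈ s := mem_of_mem_nhds hs0
  have hcont : ContinuousOn (fun x => ‖iteratedDeriv n f x‖) s :=
    fun x hx => (hf n le_rfl x hx).continuousAt.norm.continuousWithinAt
  obtain ⟨x₀, hx₀, hmax⟩ := hsc.exists_isMaxOn ⟨0, h0⟩ hcont
  set M := ‖iteratedDeriv n f x₀‖
  have hbound : ∀ k ≤ n, ∀ x ∈ s, ‖iteratedDeriv k f x‖ ≤ M * |x| ^ (n - k) :=
    fun k hk x hx => norm_iteratedDeriv_le_mul_abs_pow hs h0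
      (fun k hk => hf k hk.le) hinit (fun y hy => hmax hy) hk hx
  have hhalf_ne : ∀ x ∈ s, x ≠ 0 → ‖iteratedDeriv n f x‖ ≤ M / 2 := fun x hx hx0 =>
    calc ‖iteratedDeriv n f x‖ ≤ M * ∑ k ∈ Finset.range n, |x| ^ (n - k) * ‖b k x‖ :=
          norm_iteratedDeriv_le_of_linearODE (hode x hx hx0) (fun k hk => hbound k hk.le x hx)
      _ ≤ M * (1 / 2) := by gcongr; exact hsmall x hx hx0
      _ = M / 2 := by ring
  -- At `x = 0` the equation says nothing; the bound reaches it by continuity of `f⁽ⁿ⁾`.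
  have hhalf_zero : ‖iteratedDeriv n f 0‖ ≤ M / 2 := by
    have htend : Tendsto (fun x => ‖iteratedDeriv n f x‖) (𝓝[≠] 0) (𝓝 ‖iteratedDeriv n f 0‖) :=
      ((hcont 0 h0).continuousAt hs0).tendsto.mono_left nhdsWithin_le_nhds
    refine le_of_tendsto htend ?_
    filter_upwards [nhdsWithin_le_nhds hs0, self_mem_nhdsWithin] with x hx hx0
    exact hhalf_ne x hx hx0
  have hM0 : M = 0 := by
    have hle : M ≤ M / 2 := by
      rcases eq_or_ne x₀ 0 with rfl | hx₀0
      · exact hhalf_zero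
      · exact hhalf_ne x₀ hx₀ hx₀0
    linarith [norm_nonneg (iteratedDeriv n f x₀)]
  intro x hx
  simpa [hM0] using hbound 0 n.zero_le x hx

end LinearODE

theorem uniqueness_littleO_general
    (n : ℕ) (a : ℝ) (ha : 0 < a)
    (f : ℝ → ℂ) (b : ℕ → ℝ → ℂ)
    (hsmooth : ∀ k : ℕ, ∀ x ∈ Set.Ioo (-a) a, DifferentiableAt ℝ (iteratedDeriv k f) x)
    (hode : ∀ x ∈ Set.Ioo (-a) a, x ≠ 0 →
      iteratedDeriv n f x + ∑ k ∈ Finset.range n, b k x * iteratedDeriv k f x = 0)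
    (hinit : ∀ k < n, iteratedDeriv k f 0 = 0)
    (hcoeff : ∀ k < n,
      Filter.Tendsto (fun x : ℝ => |x| ^ (n - k) * ‖b k x‖) (𝓝[≠] (0 : ℝ)) (𝓝 0)) :
    ∃ δ > 0, ∀ x ∈ Set.Icc (-δ) δ, f x = 0 := by
  have hsum : Tendsto (fun x : ℝ => ∑ k ∈ Finset.range n, |x| ^ (n - k) * ‖b k x‖)
      (𝓝[≠] 0) (𝓝 0) := by
    simpa using tendsto_finsetSum _ fun k hk => hcoeff k (Finset.mem_range.mp hk)
  have hev : ∀ᶠ x in 𝓝 (0 : ℝ), x ∈ Set.Ioo (-a) a ∧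
      (x ≠ 0 → ∑ k ∈ Finset.range n, |x| ^ (n - k) * ‖b k x‖ ≤ 1 / 2) :=
    Eventually.and (Ioo_mem_nhds (neg_neg_of_pos ha) ha)
      (eventually_nhdsWithin_iff.mp (hsum.eventually (ge_mem_nhds one_half_pos)))
  obtain ⟨δ, hδ, hδs⟩ := (nhds_basis_Icc_pos (0 : ℝ)).eventually_iff.mp hev
  rw [zero_sub, zero_add] at hδs
  refine ⟨δ, hδ, eqOn_zero_of_linearODE (convex_Icc _ _) isCompact_Icc
    (Icc_mem_nhds (neg_neg_of_pos hδ) hδ) (fun k _ x hx => hsmooth k x (hδs hx).1)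
    (fun x hx => hode x (hδs hx).1) hinit (fun x hx => (hδs hx).2)⟩

/-- Corollary 2 (Pan–Wang): uniqueness when `|b_k(x)| = o(1/|x|^(n-k))` as `x → 0`. -/
theorem uniqueness_littleO
    (n : ℕ) (hn : 2 ≤ n) (a : ℝ) (ha : 0 < a)
    (f : ℝ → ℂ) (b : ℕ → ℝ → ℂ)
    (hsmooth : ∀ k : ℕ, ∀ x ∈ Set.Ioo (-a) a, DifferentiableAt ℝ (iteratedDeriv k f) x)
    (hode : ∀ x ∈ Set.Ioo (-a) a, x ≠ 0 →
      iteratedDeriv n f x + ∑ k ∈ Finset.range n, b k x * iteratedDeriv k f x = 0)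
    (hinit : ∀ k < n, iteratedDeriv k f 0 = 0)
    (hcoeff : ∀ k < n,
      Filter.Tendsto (fun x : ℝ => |x| ^ (n - k) * ‖b k x‖) (𝓝[≠] (0 : ℝ)) (𝓝 0)) :
    ∃ δ > 0, ∀ x ∈ Set.Icc (-δ) δ, f x = 0 :=
  uniqueness_littleO_general n a ha f b hsmooth hode hinit hcoeff
end

section
/- Let n ≥ 2, a > 0, and let f : ℝ → ℂ be infinitely differentiable on (-a, a) and satisfy f⁽ⁿ⁾(x) + b_{n-1}(x)·f⁽ⁿ⁻¹⁾(x) + ⋯ + b_0(x)·f(x) = 0 for all x ∈ (-a, a) \ {0}, where b_k : ℝ → ℂ. Assume f(0) = f'(0) = ⋯ = f⁽ⁿ⁻¹⁾(0) = 0, and assume there exists M > 0 such that |b_k(x)| ≤ M for all x in a punctured neighborhood of 0 and all k = 0, 1, …, n-1. Then there exists δ > 0 such that f ≡ 0 on [-δ, δ]. -/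
open Filter Topology

/-- Corollary 3 (Pan–Wang): uniqueness when the coefficients are bounded
on a punctured neighborhood of `0`. -/
theorem uniqueness_bounded_coeff
    (n : ℕ) (hn : 2 ≤ n) (a : ℝ) (ha : 0 < a)
    (f : ℝ → ℂ) (b : ℕ → ℝ → ℂ)
    (hsmooth : ∀ k : ℕ, ∀ x ∈ Set.Ioo (-a) a, DifferentiableAt ℝ (iteratedDeriv k f) x)
    (hode : ∀ x ∈ Set.Ioo (-a) a, x ≠ 0 →
      iteratedDeriv n f x + ∑ k ∈ Finset.range n, b k x * iteratedDeriv k f x = 0)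
    (hinit : ∀ k < n, iteratedDeriv k f 0 = 0)
    (hbound : ∃ M > (0 : ℝ), ∃ r > (0 : ℝ), ∀ k < n, ∀ x ∈ Set.Ioo (-r) r, x ≠ 0 →
      ‖b k x‖ ≤ M) :
    ∃ δ > 0, ∀ x ∈ Set.Icc (-δ) δ, f x = 0 := by
  classical
  obtain ⟨M, hM, r, hr, hb⟩ := hbound
  set ρ : ℝ := min a r with hρdef
  have hρ : 0 < ρ := lt_min ha hr
  have hρa : ρ ≤ a := min_le_left _ _
  have hρr : ρ ≤ r := min_le_right _ _
  have hsub : Set.Ioo (-ρ) ρ ⊆ Set.Ioo (-a) a := Set.Ioo_subset_Ioo (by linarith) hρa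
  have hsubr : Set.Ioo (-ρ) ρ ⊆ Set.Ioo (-r) r := Set.Ioo_subset_Ioo (by linarith) hρr
  have h0a : (0:ℝ) ∈ Set.Ioo (-a) a := ⟨by linarith, ha⟩
  -- coefficient-side bound for `f⁽ⁿ⁾` on the punctured interval
  have hnbound : ∀ x ∈ Set.Ioo (-ρ) ρ, x ≠ 0 →
      ‖iteratedDeriv n f x‖ ≤ ∑ k ∈ Finset.range n, M * ‖iteratedDeriv k f x‖ := by
    intro x hx hx0
    have heq : iteratedDeriv n f x = -∑ k ∈ Finset.range n, b k x * iteratedDeriv k f x :=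
      eq_neg_of_add_eq_zero_left (hode x (hsub hx) hx0)
    calc ‖iteratedDeriv n f x‖
        = ‖∑ k ∈ Finset.range n, b k x * iteratedDeriv k f x‖ := by rw [heq, norm_neg]
      _ ≤ ∑ k ∈ Finset.range n, ‖b k x * iteratedDeriv k f x‖ := norm_sum_le _ _
      _ ≤ ∑ k ∈ Finset.range n, M * ‖iteratedDeriv k f x‖ := by
          refine Finset.sum_le_sum fun k hk => ?_
          rw [norm_mul]
          exact mul_le_mul_of_nonneg_right
            (hb k (Finset.mem_range.mp hk) x (hsubr hx) hx0) (norm_nonneg _)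
  -- `f⁽ⁿ⁾(0) = 0` by continuity
  have hn0 : iteratedDeriv n f 0 = 0 := by
    have h1 : Tendsto (iteratedDeriv n f) (𝓝[≠] (0:ℝ)) (𝓝 (iteratedDeriv n f 0)) :=
      ((hsmooth n 0 h0a).continuousAt.tendsto).mono_left nhdsWithin_le_nhds
    have hmem : Set.Ioo (-ρ) ρ ∈ 𝓝[≠] (0:ℝ) :=
      nhdsWithin_le_nhds (Ioo_mem_nhds (by linarith) hρ)
    have h2 : Tendsto (iteratedDeriv n f) (𝓝[≠] (0:ℝ)) (𝓝 0) := by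
      apply squeeze_zero_norm'
      · filter_upwards [hmem, self_mem_nhdsWithin] with x hx hx0
        exact hnbound x hx hx0
      · have hsumt : Tendsto (fun x => ∑ k ∈ Finset.range n, M * ‖iteratedDeriv k f x‖)
            (𝓝[≠] (0:ℝ)) (𝓝 (∑ k ∈ Finset.range n, M * ‖iteratedDeriv k f 0‖)) := by
          refine tendsto_finset_sum _ fun k hk => ?_
          exact (tendsto_const_nhds.mul
            (((hsmooth k 0 h0a).continuousAt.tendsto).norm)).mono_left nhdsWithin_le_nhds
        have : (∑ k ∈ Finset.range n, M * ‖iteratedDeriv k f 0‖) = 0 := by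
          refine Finset.sum_eq_zero fun k hk => ?_
          rw [hinit k (Finset.mem_range.mp hk), norm_zero, mul_zero]
        rwa [this] at hsumt
    exact tendsto_nhds_unique h1 h2
  -- the vector of derivatives
  have hnpos : 0 < n := by omega
  set v : ℝ → (Fin n → ℂ) := fun x i => iteratedDeriv (i : ℕ) f x with hv
  set w : ℝ → (Fin n → ℂ) := fun x i => iteratedDeriv ((i : ℕ) + 1) f x with hw
  have hv0 : v 0 = 0 := by
    funext i
    exact hinit i i.isLt
  have hw0 : w 0 = 0 := by
    funext i
    have h1 : (i : ℕ) + 1 ≤ n := i.isLt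
    rcases eq_or_lt_of_le h1 with h | h
    · show iteratedDeriv ((i : ℕ) + 1) f 0 = 0
      rw [h]; exact hn0
    · exact hinit _ h
  have hderiv : ∀ x ∈ Set.Ioo (-a) a, HasDerivAt v (w x) x := by
    intro x hx
    rw [hasDerivAt_pi]
    intro i
    have h := (hsmooth i x hx).hasDerivAt
    show HasDerivAt (fun y => iteratedDeriv (i : ℕ) f y) (iteratedDeriv ((i : ℕ) + 1) f x) x
    rw [iteratedDeriv_succ]
    exact h
  set K : ℝ := n * M + 1 with hK
  have hK0 : 0 ≤ K := by positivity
  have hvcomp : ∀ x, ∀ k (hk : k < n), ‖iteratedDeriv k f x‖ ≤ ‖v x‖ := by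
    intro x k hk
    exact norm_le_pi_norm (v x) ⟨k, hk⟩
  -- the key norm bound
  have hWbound : ∀ x ∈ Set.Ioo (-ρ) ρ, ‖w x‖ ≤ K * ‖v x‖ := by
    intro x hx
    by_cases hx0 : x = 0
    · subst hx0
      rw [hw0, norm_zero]
      positivity
    · rw [pi_norm_le_iff_of_nonneg (by positivity)]
      intro i
      have h1 : (i : ℕ) + 1 ≤ n := i.isLt
      rcases eq_or_lt_of_le h1 with h | h
      · show ‖iteratedDeriv ((i : ℕ) + 1) f x‖ ≤ K * ‖v x‖
        rw [h]
        calc ‖iteratedDeriv n f x‖ ≤ ∑ k ∈ Finset.range n, M * ‖iteratedDeriv k f x‖ :=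
              hnbound x hx hx0
          _ ≤ ∑ k ∈ Finset.range n, M * ‖v x‖ := by
              refine Finset.sum_le_sum fun k hk => ?_
              exact mul_le_mul_of_nonneg_left (hvcomp x k (Finset.mem_range.mp hk)) hM.le
          _ = (n * M) * ‖v x‖ := by
              rw [Finset.sum_const, Finset.card_range, nsmul_eq_mul]; ring
          _ ≤ K * ‖v x‖ := by
              have := norm_nonneg (v x)
              nlinarith
      · calc ‖w x i‖ ≤ ‖v x‖ := hvcomp x _ h
          _ ≤ K * ‖v x‖ := by
              have := norm_nonneg (v x)
              nlinarith [mul_nonneg (Nat.cast_nonneg (α := ℝ) n) hM.le]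
  -- Gronwall on the right
  set δ : ℝ := ρ / 2 with hδ
  have hδ0 : 0 < δ := by positivity
  have hIccR : Set.Icc (0:ℝ) δ ⊆ Set.Ioo (-ρ) ρ := by
    intro x hx
    constructor <;> [linarith [hx.1]; linarith [hx.2]]
  have hright : ∀ x ∈ Set.Icc (0:ℝ) δ, v x = 0 := by
    have hg := norm_le_gronwallBound_of_norm_deriv_right_le (f := v) (f' := w)
      (δ := 0) (K := K) (ε := 0) (a := 0) (b := δ)
      (fun x hx => ((hderiv x (hsub (hIccR hx))).continuousAt).continuousWithinAt)
      (fun x hx => (hderiv x (hsub (hIccR (Set.Ico_subset_Icc_self hx)))).hasDerivWithinAt)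
      (by rw [hv0, norm_zero])
      (fun x hx => by
        rw [add_zero]
        exact hWbound x (hIccR (Set.Ico_subset_Icc_self hx)))
    intro x hx
    have := hg x hx
    rw [gronwallBound_ε0_δ0] at this
    exact norm_le_zero_iff.mp this
  -- Gronwall on the left (reflect)
  have hleft : ∀ x ∈ Set.Icc (0:ℝ) δ, v (-x) = 0 := by
    have hd : ∀ x ∈ Set.Icc (0:ℝ) δ, HasDerivAt (fun y => v (-y)) ((-1 : ℝ) • w (-x)) x := by
      intro x hx
      have hmem : -x ∈ Set.Ioo (-a) a := by
        have := hIccR hx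
        have h1 : -ρ < -x ∧ -x < ρ := by constructor <;> [linarith [this.2]; linarith [this.1]]
        exact hsub ⟨h1.1, h1.2⟩
      exact (hderiv (-x) hmem).scomp x (hasDerivAt_neg x)
    have hg := norm_le_gronwallBound_of_norm_deriv_right_le
      (f := fun y => v (-y)) (f' := fun y => (-1 : ℝ) • w (-y))
      (δ := 0) (K := K) (ε := 0) (a := 0) (b := δ)
      (fun x hx => ((hd x hx).continuousAt).continuousWithinAt)
      (fun x hx => (hd x (Set.Ico_subset_Icc_self hx)).hasDerivWithinAt)
      (by simp [hv0])
      (fun x hx => by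
        rw [add_zero, norm_smul]
        simp only [norm_neg, norm_one]
        rw [one_mul]
        refine hWbound (-x) ?_
        have := hIccR (Set.Ico_subset_Icc_self hx)
        exact ⟨by linarith [this.2], by linarith [this.1]⟩)
    intro x hx
    have := hg x hx
    rw [gronwallBound_ε0_δ0] at this
    exact norm_le_zero_iff.mp this
  refine ⟨δ, hδ0, fun x hx => ?_⟩
  have key : v x = 0 := by
    rcases le_total 0 x with h | h
    · exact hright x ⟨h, hx.2⟩
    · have : v (-(-x)) = 0 := hleft (-x) ⟨by linarith, by linarith [hx.1]⟩
      rwa [neg_neg] at this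
  have := congrFun key ⟨0, hnpos⟩
  simpa [hv, iteratedDeriv_zero] using this
end

section
/- Let n ≥ 2, let (a, b) be an open interval containing 0, let C ≥ 0 be a constant, and let f : ℝ → ℂ be infinitely differentiable on (a, b) satisfying the differential inequality |f⁽ⁿ⁾(x)| ≤ C · Σ_{k=0}^{n-1} |f⁽ᵏ⁾(x)| / |x|^{n-k} for all x ∈ (a, b) with x ≠ 0. If f⁽ᵏ⁾(0) = 0 for all k ≥ 0, then f ≡ 0 on (a, b). -/
/-!
Put `J(x) = (xⁱ f⁽ⁱ⁾(x))_{i<n}`. In the variable `t = log x` the differential inequality becomes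
`‖dJ/dt‖ ≤ K ‖J‖` with `K = n + 1 + C n`, so Grönwall gives `‖J(x)‖ ≤ ‖J(y)‖ (x / y)ᴷ` for
`0 < y ≤ x`. Flatness at `0` makes `‖J(y)‖ = o(yᴷ)` as `y → 0⁺`, hence `J(x) = 0` and in
particular `f(x) = 0`. Negative `x` are reduced to positive ones by the reflection `x ↦ -x`.
-/

open Filter Topology Asymptotics Real Set

noncomputable section

variable {E : Type*} [NormedAddCommGroup E] [NormedSpace ℝ E]

def scaledJet (n : ℕ) (f : ℝ → E) (x : ℝ) : Fin n → E :=
  fun i => x ^ (i : ℕ) • iteratedDeriv i f x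

def scaledJetEuler (n : ℕ) (f : ℝ → E) (x : ℝ) : Fin n → E :=
  fun i => (i : ℝ) • scaledJet n f x i + x ^ ((i : ℕ) + 1) • iteratedDeriv (i + 1) f x

lemma hasDerivAt_scaledJet_comp_exp {n : ℕ} {f : ℝ → E} {t : ℝ}
    (hf : ∀ i < n, DifferentiableAt ℝ (iteratedDeriv i f) (exp t)) :
    HasDerivAt (fun s => scaledJet n f (exp s)) (scaledJetEuler n f (exp t)) t := by
  refine hasDerivAt_pi.2 fun i => ?_
  have hpow : HasDerivAt (fun s => exp s ^ (i : ℕ)) ((i : ℝ) * exp t ^ (i : ℕ)) t := by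
    simpa [← exp_nat_mul, mul_comm] using ((hasDerivAt_id t).const_mul (i : ℝ)).exp
  have hder : HasDerivAt (fun s => iteratedDeriv i f (exp s))
      (exp t • iteratedDeriv (i + 1) f (exp t)) t := by
    rw [iteratedDeriv_succ]
    exact (hf i i.2).hasDerivAt.scomp t (hasDerivAt_exp t)
  refine (hpow.smul hder).congr_deriv ?_
  simp only [scaledJetEuler, scaledJet, smul_smul, pow_succ]
  rw [add_comm]

lemma norm_pow_smul_iteratedDeriv_le {n : ℕ} {C x : ℝ} {f : ℝ → E} (hC : 0 ≤ C)
    (hx : 0 < x)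
    (hineq : ‖iteratedDeriv n f x‖ ≤
      C * ∑ k ∈ Finset.range n, ‖iteratedDeriv k f x‖ / |x| ^ (n - k)) :
    ‖x ^ n • iteratedDeriv n f x‖ ≤ C * n * ‖scaledJet n f x‖ := by
  have hterm : ∀ k ∈ Finset.range n, x ^ n * (‖iteratedDeriv k f x‖ / |x| ^ (n - k)) =
      ‖x ^ k • iteratedDeriv k f x‖ := by
    intro k hk
    rw [norm_smul, norm_pow, Real.norm_of_nonneg hx.le, abs_of_pos hx,
      ← pow_sub_mul_pow x (Finset.mem_range.1 hk).le]
    field_simp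
  calc ‖x ^ n • iteratedDeriv n f x‖ = x ^ n * ‖iteratedDeriv n f x‖ := by
        rw [norm_smul, norm_pow, Real.norm_of_nonneg hx.le]
    _ ≤ x ^ n * (C * ∑ k ∈ Finset.range n, ‖iteratedDeriv k f x‖ / |x| ^ (n - k)) := by
        gcongr
    _ = C * ∑ k : Fin n, ‖scaledJet n f x k‖ := by
        rw [mul_left_comm, Finset.mul_sum, Finset.sum_congr rfl hterm, Finset.sum_range]
        rfl
    _ ≤ C * n * ‖scaledJet n f x‖ := by
        rw [mul_assoc]
        gcongr
        simpa using Pi.sum_norm_apply_le_norm (scaledJet n f x)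

lemma norm_scaledJetEuler_le {n : ℕ} {C x : ℝ} {f : ℝ → E} (hC : 0 ≤ C) (hx : 0 < x)
    (hineq : ‖iteratedDeriv n f x‖ ≤
      C * ∑ k ∈ Finset.range n, ‖iteratedDeriv k f x‖ / |x| ^ (n - k)) :
    ‖scaledJetEuler n f x‖ ≤ (n + 1 + C * n) * ‖scaledJet n f x‖ := by
  have hJ := norm_nonneg (scaledJet n f x)
  refine (pi_norm_le_iff_of_nonneg (by positivity)).2 fun i => (norm_add_le _ _).trans ?_
  have hfirst : ‖(i : ℝ) • scaledJet n f x i‖ ≤ n * ‖scaledJet n f x‖ := by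
    rw [norm_smul, Real.norm_natCast]
    exact mul_le_mul (by exact_mod_cast i.2.le) (norm_le_pi_norm _ i) (norm_nonneg _)
      (by positivity)
  have hsecond : ‖x ^ ((i : ℕ) + 1) • iteratedDeriv (i + 1) f x‖ ≤
      (1 + C * n) * ‖scaledJet n f x‖ := by
    rcases (Nat.succ_le_of_lt i.2).lt_or_eq with hlt | heq
    · have := norm_le_pi_norm (scaledJet n f x) ⟨i + 1, hlt⟩
      simp only [scaledJet] at this
      nlinarith [mul_nonneg hC (Nat.cast_nonneg (α := ℝ) n)]
    · rw [show (i : ℕ) + 1 = n from heq]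
      have := norm_pow_smul_iteratedDeriv_le hC hx hineq
      nlinarith
  linarith

variable {F : Type*} [NormedAddCommGroup F] [NormedSpace ℝ F]

lemma norm_le_mul_exp_of_norm_deriv_le {g g' : ℝ → F} {K s t : ℝ} (hst : s ≤ t)
    (hg : ∀ τ ∈ Icc s t, HasDerivAt g (g' τ) τ) (hbound : ∀ τ ∈ Ico s t, ‖g' τ‖ ≤ K * ‖g τ‖) :
    ‖g t‖ ≤ ‖g s‖ * exp (K * (t - s)) := by
  have := norm_le_gronwallBound_of_norm_deriv_right_le (K := K) (ε := 0)
    (fun τ hτ => (hg τ hτ).continuousAt.continuousWithinAt)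
    (fun τ hτ => (hg τ (Ico_subset_Icc_self hτ)).hasDerivWithinAt) le_rfl
    (fun τ hτ => by simpa using hbound τ hτ) t ⟨hst, le_rfl⟩
  rwa [gronwallBound_ε0] at this

lemma iteratedDeriv_isLittleO_pow_of_flat {f : ℝ → E} {s : Set ℝ} (hs : Convex ℝ s)
    (h0 : 0 ∈ s)
    (hsmooth : ∀ k, ∀ x ∈ s, DifferentiableAt ℝ (iteratedDeriv k f) x)
    (hflat : ∀ k, iteratedDeriv k f 0 = 0) (k m : ℕ) :
    iteratedDeriv k f =o[𝓝[s] 0] fun x => x ^ m := by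
  induction m generalizing k with
  | zero =>
    simpa [isLittleO_one_iff, hflat k] using
      ((hsmooth k 0 h0).continuousAt.continuousWithinAt (s := s)).tendsto
  | succ m ih =>
    have hder : ∀ x ∈ s, HasDerivWithinAt (iteratedDeriv k f) (iteratedDeriv (k + 1) f x) s x :=
      fun x hx => by
        rw [iteratedDeriv_succ]
        exact (hsmooth k x hx).hasDerivAt.hasDerivWithinAt
    simpa [hflat k] using hs.isLittleO_pow_succ_real h0 hder (by simpa using ih (k + 1))

lemma isLittleO_scaledJet_comp_exp {n : ℕ} {f : ℝ → E}
    (hf : ∀ k m, iteratedDeriv k f =o[𝓝 0] fun x => x ^ m) (K : ℝ) :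
    (fun s => scaledJet n f (exp s)) =o[atBot] fun s => exp (K * s) := by
  refine isLittleO_pi.2 fun i => ?_
  have hderiv : (fun s => iteratedDeriv i f (exp s)) =o[atBot] fun s => exp s ^ ⌈K⌉₊ :=
    (hf i ⌈K⌉₊).comp_tendsto tendsto_exp_atBot
  have hpow : (fun s => exp s ^ ⌈K⌉₊) =O[atBot] fun s => exp (K * s) := by
    refine IsBigO.of_bound 1 ((eventually_le_atBot 0).mono fun s hs => ?_)
    rw [one_mul, norm_of_nonneg (by positivity), norm_of_nonneg (exp_pos _).le, ← exp_nat_mul]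
    exact exp_le_exp.2 (mul_le_mul_of_nonpos_right (Nat.le_ceil K) hs)
  have hweight : (fun s => exp s ^ (i : ℕ)) =O[atBot] fun _ => (1 : ℝ) := by
    refine IsBigO.of_bound 1 ((eventually_le_atBot 0).mono fun s hs => ?_)
    rw [one_mul, norm_one, norm_of_nonneg (by positivity)]
    exact pow_le_one₀ (exp_pos s).le (exp_le_one_iff.2 hs)
  simpa [scaledJet] using hweight.smul_isLittleO (hderiv.trans_isBigO hpow)

theorem eq_zero_of_flat_of_pos {n : ℕ} {a b C : ℝ} {f : ℝ → E} (hn : 0 < n) (ha : a < 0)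
    (hb : 0 < b) (hC : 0 ≤ C)
    (hsmooth : ∀ k, ∀ x ∈ Ioo a b, DifferentiableAt ℝ (iteratedDeriv k f) x)
    (hineq : ∀ x ∈ Ioo 0 b,
      ‖iteratedDeriv n f x‖ ≤ C * ∑ k ∈ Finset.range n, ‖iteratedDeriv k f x‖ / |x| ^ (n - k))
    (hflat : ∀ k, iteratedDeriv k f 0 = 0) :
    ∀ x ∈ Ioo 0 b, f x = 0 := by
  intro x hx
  set K : ℝ := n + 1 + C * n
  set J : ℝ → Fin n → E := fun s => scaledJet n f (exp s)
  have hexp_mem : ∀ s ≤ log x, exp s ∈ Ioo 0 b := fun s hs =>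
    ⟨exp_pos s, (exp_le_exp.2 hs).trans_lt ((exp_log hx.1).symm ▸ hx.2)⟩
  have hJ_deriv : ∀ s ≤ log x, HasDerivAt J (scaledJetEuler n f (exp s)) s := fun s hs =>
    hasDerivAt_scaledJet_comp_exp fun i _ =>
      hsmooth i _ ⟨ha.trans (hexp_mem s hs).1, (hexp_mem s hs).2⟩
  have hgrowth : ∀ s ≤ log x, ‖J (log x)‖ ≤ ‖J s‖ * exp (K * (log x - s)) := fun s hs =>
    norm_le_mul_exp_of_norm_deriv_le hs (fun τ hτ => hJ_deriv τ hτ.2) fun τ hτ =>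
      norm_scaledJetEuler_le hC (exp_pos τ) (hineq _ (hexp_mem τ hτ.2.le))
  have hflat_o : ∀ k m, iteratedDeriv k f =o[𝓝 0] fun x => x ^ m := by
    simpa only [nhdsWithin_eq_nhds.2 (Ioo_mem_nhds ha hb)] using
      iteratedDeriv_isLittleO_pow_of_flat (convex_Ioo a b) ⟨ha, hb⟩ hsmooth hflat
  have hlim : Tendsto (fun s => ‖J s‖ * exp (K * (log x - s))) atBot (𝓝 0) := by
    have := (isLittleO_scaledJet_comp_exp (n := n) hflat_o K).norm_left.tendsto_div_nhds_zero
      |>.const_mul (exp (K * log x))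
    rw [mul_zero] at this
    refine this.congr fun s => ?_
    rw [mul_sub, exp_sub]
    ring
  have hJx : J (log x) = 0 :=
    norm_le_zero_iff.1 (ge_of_tendsto hlim ((eventually_le_atBot _).mono hgrowth))
  simpa [J, scaledJet, exp_log hx.1] using congrFun hJx ⟨0, hn⟩

theorem eq_zero_of_flat_of_neg {n : ℕ} {a b C : ℝ} {f : ℝ → E} (hn : 0 < n) (ha : a < 0)
    (hb : 0 < b) (hC : 0 ≤ C)
    (hsmooth : ∀ k, ∀ x ∈ Ioo a b, DifferentiableAt ℝ (iteratedDeriv k f) x)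
    (hineq : ∀ x ∈ Ioo a 0,
      ‖iteratedDeriv n f x‖ ≤ C * ∑ k ∈ Finset.range n, ‖iteratedDeriv k f x‖ / |x| ^ (n - k))
    (hflat : ∀ k, iteratedDeriv k f 0 = 0) :
    ∀ x ∈ Ioo a 0, f x = 0 := by
  have hnorm (k : ℕ) (y : ℝ) :
      ‖iteratedDeriv k (fun x => f (-x)) y‖ = ‖iteratedDeriv k f (-y)‖ := by
    simp [iteratedDeriv_comp_neg, norm_smul]
  have hreflect := eq_zero_of_flat_of_pos (f := fun x => f (-x)) hn (neg_lt_zero.2 hb)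
    (neg_pos.2 ha) hC
    (fun k y hy => by
      rw [funext (iteratedDeriv_comp_neg k f)]
      have hy' : -y ∈ Ioo a b := ⟨lt_neg.1 hy.2, neg_lt.1 hy.1⟩
      exact ((hsmooth k (-y) hy').comp y differentiableAt_id.neg).const_smul _)
    (fun y hy => by
      simpa only [hnorm, abs_neg] using hineq (-y) ⟨lt_neg.1 hy.2, neg_neg_iff_pos.2 hy.1⟩)
    (fun k => by simp [iteratedDeriv_comp_neg, hflat])
  intro x hx
  simpa using hreflect (-x) ⟨neg_pos.2 hx.2, neg_lt_neg hx.1⟩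

end

/-- Lemma 6 (Pan–Wang, from their previous paper): if a smooth function satisfies the
differential inequality `‖f⁽ⁿ⁾(x)‖ ≤ C ∑_{k<n} ‖f⁽ᵏ⁾(x)‖ / |x|^(n-k)` on an interval
around `0` and vanishes to infinite order at `0`, then `f ≡ 0` on the interval. -/
theorem flat_implies_zero
    (n : ℕ) (hn : 2 ≤ n) (a b : ℝ) (ha : a < 0) (hb : 0 < b)
    (C : ℝ) (hC : 0 ≤ C) (f : ℝ → ℂ)
    (hsmooth : ∀ k : ℕ, ∀ x ∈ Set.Ioo a b, DifferentiableAt ℝ (iteratedDeriv k f) x)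
    (hineq : ∀ x ∈ Set.Ioo a b, x ≠ 0 →
      ‖iteratedDeriv n f x‖ ≤ C * ∑ k ∈ Finset.range n, ‖iteratedDeriv k f x‖ / |x| ^ (n - k))
    (hflat : ∀ k : ℕ, iteratedDeriv k f 0 = 0) :
    ∀ x ∈ Set.Ioo a b, f x = 0 := by
  intro x hx
  have hn0 : 0 < n := by omega
  rcases lt_trichotomy x 0 with hneg | rfl | hpos
  · exact eq_zero_of_flat_of_neg hn0 ha hb hC hsmooth
      (fun y hy => hineq y ⟨hy.1, hy.2.trans hb⟩ hy.2.ne) hflat x ⟨hx.1, hneg⟩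
  · simpa using hflat 0
  · exact eq_zero_of_flat_of_pos hn0 ha hb hC hsmooth
      (fun y hy => hineq y ⟨ha.trans hy.1, hy.2⟩ hy.1.ne') hflat x ⟨hpos, hx.2⟩
end

section
/- Let n ≥ 2, let (a, b) be an open interval containing 0, let C ≥ 0 be a constant, and let f : ℝ → ℂ be infinitely differentiable on (a, b) satisfying |f⁽ⁿ⁾(x)| ≤ C · Σ_{k=0}^{n-1} |f⁽ᵏ⁾(x)| / |x|^{n-k} for all x ∈ (a, b) with x ≠ 0. If f is not identically zero on (a, b), then f has finite vanishing order N at 0 (i.e., there exists N ≥ 0 with f⁽ᴺ⁾(0) ≠ 0 and f⁽ʲ⁾(0) = 0 for all 0 ≤ j < N), and this vanishing order satisfies N ≤ B_n·C + n - 1, where B_n = Σ_{k=0}^{n-1} 1/k!. -/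
/-!
Put `G x = ∫ t in 0..x, ‖f⁽ⁿ⁾ t‖`. If `f` vanishes to order `n` at `0`, Taylor's estimate gives
`‖f⁽ᵏ⁾ x‖ ≤ G x · x ^ (n - 1 - k) / (n - 1 - k)!` for `k < n`, so the differential inequality
becomes `x · G' x ≤ B_n C · G x` and `G x · x ^ (-B_n C)` is nonincreasing on `(0, b)`. If `f`
vanishes to an order `N > B_n C + n - 1`, then `G x = O(x ^ (N - n + 1))` decays faster than
`x ^ (B_n C)`, which forces `G = 0`, hence `f = 0` on `(0, b)`; applying this to `x ↦ f (-x)`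
covers `(a, 0)`. So a nontrivial `f` has a nonzero derivative at `0`, and the first one has
order at most `B_n C + n - 1`.
-/

open Filter Topology Set Finset intervalIntegral
open scoped Nat

theorem eqOn_zero_of_mul_deriv_le_of_le_pow {G G' : ℝ → ℝ} {c p K : ℝ} {q : ℕ}
    (hpq : p < q) (hcont : ContinuousOn G (Ioc 0 c))
    (hderiv : ∀ x ∈ Ioo 0 c, HasDerivAt G (G' x) x)
    (hineq : ∀ x ∈ Ioo 0 c, x * G' x ≤ p * G x)
    (hnonneg : ∀ x ∈ Ioc 0 c, 0 ≤ G x) (hbound : ∀ x ∈ Ioc 0 c, G x ≤ K * x ^ q) :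
    EqOn G 0 (Ioc 0 c) := by
  set H : ℝ → ℝ := fun x => G x * x ^ (-p)
  have hH_deriv : ∀ x ∈ Ioo 0 c, HasDerivAt H (x ^ (-p - 1) * (x * G' x - p * G x)) x := by
    intro x hx
    refine ((hderiv x hx).mul (Real.hasDerivAt_rpow_const (p := -p) (.inl hx.1.ne'))).congr_deriv ?_
    have hx0 : x ≠ 0 := hx.1.ne'
    rw [Real.rpow_sub_one hx0]
    field_simp
    ring
  have hH_anti : AntitoneOn H (Ioc 0 c) := by
    refine antitoneOn_of_deriv_nonpos (convex_Ioc 0 c)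
      (hcont.mul fun x hx => (Real.continuousAt_rpow_const x _ (.inl hx.1.ne')).continuousWithinAt)
      ?_ fun x hx => ?_
    · rw [interior_Ioc]
      exact fun x hx => (hH_deriv x hx).differentiableAt.differentiableWithinAt
    · rw [interior_Ioc] at hx
      rw [(hH_deriv x hx).deriv]
      exact mul_nonpos_of_nonneg_of_nonpos (Real.rpow_nonneg hx.1.le _)
        (sub_nonpos.2 (hineq x hx))
  have hH_le : ∀ y ∈ Ioc 0 c, H y ≤ K * y ^ ((q : ℝ) - p) := by
    intro y hy
    calc H y ≤ K * y ^ q * y ^ (-p) :=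
          mul_le_mul_of_nonneg_right (hbound y hy) (Real.rpow_nonneg hy.1.le _)
      _ = K * y ^ ((q : ℝ) - p) := by
          rw [sub_eq_add_neg, Real.rpow_add hy.1, Real.rpow_natCast, mul_assoc]
  have hlim : Tendsto (fun y : ℝ => K * y ^ ((q : ℝ) - p)) (𝓝[>] 0) (𝓝 0) := by
    have h := (Real.continuousAt_rpow_const 0 ((q : ℝ) - p) (.inr (sub_pos.2 hpq).le)).tendsto
    rw [Real.zero_rpow (sub_pos.2 hpq).ne'] at h
    simpa using (h.mono_left nhdsWithin_le_nhds).const_mul K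
  intro x hx
  have hHx : H x ≤ 0 := by
    refine ge_of_tendsto hlim ?_
    filter_upwards [Ioc_mem_nhdsGT hx.1] with y hy
    exact (hH_anti ⟨hy.1, hy.2.trans hx.2⟩ hx hy.2).trans (hH_le y ⟨hy.1, hy.2.trans hx.2⟩)
  have hpos : 0 < x ^ (-p) := Real.rpow_pos_of_pos hx.1 _
  exact le_antisymm (nonpos_of_mul_nonpos_left hHx hpos) (hnonneg x hx)

section

variable {E : Type*} [NormedAddCommGroup E] [NormedSpace ℝ E] {f : ℝ → E} {k : ℕ}

theorem DifferentiableAt.hasDerivAt_iteratedDeriv {x : ℝ}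
    (h : DifferentiableAt ℝ (iteratedDeriv k f) x) :
    HasDerivAt (iteratedDeriv k f) (iteratedDeriv (k + 1) f x) x := by
  rw [iteratedDeriv_succ]
  exact h.hasDerivAt

theorem norm_iteratedDeriv_le_of_iteratedDeriv_eq_zero {c M : ℝ} {j m : ℕ}
    (hdiff : ∀ k, ∀ t ∈ Icc 0 c, DifferentiableAt ℝ (iteratedDeriv k f) t)
    (hzero : ∀ i < m, iteratedDeriv (j + i) f 0 = 0)
    (hM : ∀ t ∈ Icc 0 c, ‖iteratedDeriv (j + m) f t‖ ≤ M) :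
    ∀ x ∈ Icc 0 c, ‖iteratedDeriv j f x‖ ≤ M * x ^ m / m ! := by
  induction m generalizing j with
  | zero => simpa using hM
  | succ m ih =>
    have hnext := ih (j := j + 1)
      (fun i hi => by rw [add_assoc, add_comm 1]; exact hzero (i + 1) (by omega))
      (by rwa [add_assoc, add_comm 1])
    refine image_norm_le_of_norm_deriv_right_le_deriv_boundary
      (fun t ht => (hdiff j t ht).continuousAt.continuousWithinAt)
      (fun t ht => (hdiff j t (Ico_subset_Icc_self ht)).hasDerivAt_iteratedDeriv.hasDerivWithinAt)
      (by simpa using hzero 0 m.succ_pos) (fun t => ?_)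
      (fun t ht => hnext t (Ico_subset_Icc_self ht))
    refine (((hasDerivAt_pow (m + 1) t).const_mul M).div_const ((m + 1)! : ℝ)).congr_deriv ?_
    rw [Nat.factorial_succ]
    push_cast
    field_simp

theorem norm_iteratedDeriv_le_integral_norm_mul_pow [CompleteSpace E] {x : ℝ} {n : ℕ}
    (hx : 0 ≤ x) (hdiff : ∀ k, ∀ t ∈ Icc 0 x, DifferentiableAt ℝ (iteratedDeriv k f) t)
    (hzero : ∀ j < n, iteratedDeriv j f 0 = 0) (hk : k < n) :
    ‖iteratedDeriv k f x‖ ≤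
      (∫ t in 0..x, ‖iteratedDeriv n f t‖) * x ^ (n - 1 - k) / (n - 1 - k)! := by
  obtain ⟨m, rfl⟩ : ∃ m, n = k + m + 1 := ⟨n - 1 - k, by omega⟩
  rw [show k + m + 1 - 1 - k = m by omega]
  have hcont : ContinuousOn (iteratedDeriv (k + m + 1) f) (Icc 0 x) :=
    fun t ht => (hdiff _ t ht).continuousAt.continuousWithinAt
  refine norm_iteratedDeriv_le_of_iteratedDeriv_eq_zero hdiff
    (fun i hi => hzero (k + i) (by omega)) (fun t ht => ?_) x ⟨hx, le_rfl⟩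
  have hsub : Icc 0 t ⊆ Icc 0 x := Icc_subset_Icc_right ht.2
  have hftc := integral_eq_sub_of_hasDerivAt (f := iteratedDeriv (k + m) f)
    (fun s hs => (hdiff _ s (hsub (uIcc_of_le ht.1 ▸ hs))).hasDerivAt_iteratedDeriv)
    (hcont.mono (uIcc_of_le ht.1 ▸ hsub)).intervalIntegrable
  rw [hzero _ (by omega), sub_zero] at hftc
  rw [← hftc]
  calc ‖∫ s in 0..t, iteratedDeriv (k + m + 1) f s‖
      ≤ ∫ s in 0..t, ‖iteratedDeriv (k + m + 1) f s‖ := norm_integral_le_integral_norm ht.1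
    _ ≤ ∫ s in 0..x, ‖iteratedDeriv (k + m + 1) f s‖ :=
        integral_mono_interval le_rfl ht.1 ht.2 (.of_forall fun _ => norm_nonneg _)
          (hcont.norm.mono (uIcc_of_le hx).subset).intervalIntegrable

theorem mul_norm_iteratedDeriv_le_integral [CompleteSpace E] {n : ℕ} {C x : ℝ} (hx : 0 < x)
    (hC : 0 ≤ C) (hdiff : ∀ k, ∀ t ∈ Icc 0 x, DifferentiableAt ℝ (iteratedDeriv k f) t)
    (hzero : ∀ j < n, iteratedDeriv j f 0 = 0)
    (hineq : ‖iteratedDeriv n f x‖ ≤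
      C * ∑ k ∈ range n, ‖iteratedDeriv k f x‖ / |x| ^ (n - k)) :
    x * ‖iteratedDeriv n f x‖ ≤
      (∑ k ∈ range n, (1 : ℝ) / k !) * C * ∫ t in 0..x, ‖iteratedDeriv n f t‖ := by
  set G := ∫ t in 0..x, ‖iteratedDeriv n f t‖
  have hterm : ∀ k ∈ range n,
      ‖iteratedDeriv k f x‖ / |x| ^ (n - k) ≤ 1 / (n - 1 - k)! * (G / x) := by
    intro k hk
    have hkn := mem_range.1 hk
    rw [abs_of_pos hx, show n - k = n - 1 - k + 1 by omega, pow_succ, div_le_iff₀ (by positivity)]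
    calc ‖iteratedDeriv k f x‖ ≤ G * x ^ (n - 1 - k) / (n - 1 - k)! :=
          norm_iteratedDeriv_le_integral_norm_mul_pow hx.le hdiff hzero hkn
      _ = 1 / (n - 1 - k)! * (G / x) * (x ^ (n - 1 - k) * x) := by field_simp
  calc x * ‖iteratedDeriv n f x‖
      ≤ x * (C * ∑ k ∈ range n, ‖iteratedDeriv k f x‖ / |x| ^ (n - k)) := by gcongr
    _ ≤ x * (C * ∑ k ∈ range n, 1 / (n - 1 - k)! * (G / x)) := by
        gcongr with k hk
        exact hterm k hk
    _ = (∑ k ∈ range n, (1 : ℝ) / (n - 1 - k)!) * C * G := by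
        rw [← sum_mul]; field_simp
    _ = (∑ k ∈ range n, (1 : ℝ) / k !) * C * G := by
        rw [sum_range_reflect (fun k => (1 : ℝ) / k !) n]

theorem exists_integral_norm_iteratedDeriv_le_mul_pow {n m : ℕ} {c : ℝ}
    (hdiff : ∀ k, ∀ t ∈ Icc 0 c, DifferentiableAt ℝ (iteratedDeriv k f) t)
    (hzero : ∀ i < m, iteratedDeriv (n + i) f 0 = 0) :
    ∃ K, ∀ y ∈ Icc 0 c, ∫ t in 0..y, ‖iteratedDeriv n f t‖ ≤ K * y ^ (m + 1) := by
  obtain ⟨M, hM⟩ := isCompact_Icc.exists_bound_of_continuousOn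
    (fun t ht => (hdiff (n + m) t ht).continuousAt.continuousWithinAt :
      ContinuousOn (iteratedDeriv (n + m) f) (Icc 0 c))
  have hpow := norm_iteratedDeriv_le_of_iteratedDeriv_eq_zero hdiff hzero hM
  refine ⟨M / m !, fun y hy => ?_⟩
  have hbound : ∀ t ∈ uIoc 0 y, ‖‖iteratedDeriv n f t‖‖ ≤ M * y ^ m / m ! := by
    intro t ht
    rw [uIoc_of_le hy.1] at ht
    have hM0 : 0 ≤ M := (norm_nonneg _).trans (hM t ⟨ht.1.le, ht.2.trans hy.2⟩)
    rw [norm_norm]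
    refine (hpow t ⟨ht.1.le, ht.2.trans hy.2⟩).trans ?_
    gcongr
    exacts [ht.1.le, ht.2]
  calc ∫ t in 0..y, ‖iteratedDeriv n f t‖
      ≤ ‖∫ t in 0..y, ‖iteratedDeriv n f t‖‖ := Real.le_norm_self _
    _ ≤ M * y ^ m / m ! * |y - 0| := norm_integral_le_of_norm_le_const hbound
    _ = M / m ! * y ^ (m + 1) := by rw [sub_zero, abs_of_nonneg hy.1]; ring

theorem eqOn_zero_Ioc_of_iteratedDeriv_eq_zero [CompleteSpace E] {n m : ℕ} {C c : ℝ}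
    (hn : 0 < n) (hC : 0 ≤ C)
    (hdiff : ∀ k, ∀ t ∈ Icc 0 c, DifferentiableAt ℝ (iteratedDeriv k f) t)
    (hineq : ∀ x ∈ Ioo 0 c, ‖iteratedDeriv n f x‖ ≤
      C * ∑ k ∈ range n, ‖iteratedDeriv k f x‖ / |x| ^ (n - k))
    (hzero : ∀ j < n + m, iteratedDeriv j f 0 = 0)
    (hm : (∑ k ∈ range n, (1 : ℝ) / k !) * C < m + 1) :
    EqOn f 0 (Ioc 0 c) := by
  set G : ℝ → ℝ := fun x => ∫ t in 0..x, ‖iteratedDeriv n f t‖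
  have hcont : ContinuousOn (fun t => ‖iteratedDeriv n f t‖) (Icc 0 c) :=
    fun t ht => (hdiff n t ht).continuousAt.norm.continuousWithinAt
  have hdiff_le {x : ℝ} (hx : x ∈ Ioc 0 c) :
      ∀ k, ∀ t ∈ Icc 0 x, DifferentiableAt ℝ (iteratedDeriv k f) t :=
    fun k t ht => hdiff k t (Icc_subset_Icc_right hx.2 ht)
  obtain ⟨K, hK⟩ := exists_integral_norm_iteratedDeriv_le_mul_pow (m := m) hdiff
    (fun i hi => hzero (n + i) (by omega))
  have hG_zero : EqOn G 0 (Ioc 0 c) := by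
    refine eqOn_zero_of_mul_deriv_le_of_le_pow (G' := fun x => ‖iteratedDeriv n f x‖)
      (by exact_mod_cast hm) (fun x hx => ?_) (fun y hy => ?_) (fun y hy => ?_)
      (fun y hy => integral_nonneg hy.1.le fun _ _ => norm_nonneg _)
      (fun y hy => hK y (Ioc_subset_Icc_self hy))
    · have hc : 0 ≤ c := hx.1.le.trans hx.2
      have hG : ContinuousOn G (uIcc 0 c) := continuousOn_primitive_interval
        (by rw [uIcc_of_le hc]; exact hcont.integrableOn_Icc)
      rw [uIcc_of_le hc] at hG
      exact hG.mono Set.Ioc_subset_Icc_self x hx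
    · exact integral_hasDerivAt_right
        ((hcont.mono (Icc_subset_Icc_right hy.2.le)).intervalIntegrable_of_Icc hy.1.le)
        ((hcont.mono Ioo_subset_Icc_self).stronglyMeasurableAtFilter isOpen_Ioo y hy)
        (hdiff n y (Ioo_subset_Icc_self hy)).continuousAt.norm
    · exact mul_norm_iteratedDeriv_le_integral hy.1 hC (hdiff_le ⟨hy.1, hy.2.le⟩)
        (fun j hj => hzero j (by omega)) (hineq y hy)
  intro x hx
  have h := norm_iteratedDeriv_le_integral_norm_mul_pow hx.1.le (hdiff_le hx)
    (fun j hj => hzero j (by omega)) hn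
  have hGx : ∫ t in 0..x, ‖iteratedDeriv n f t‖ = 0 := hG_zero hx
  rw [iteratedDeriv_zero, hGx, zero_mul, zero_div] at h
  exact norm_le_zero_iff.1 h

theorem norm_iteratedDeriv_comp_neg (x : ℝ) :
    ‖iteratedDeriv k (fun y => f (-y)) x‖ = ‖iteratedDeriv k f (-x)‖ := by
  simp [iteratedDeriv_comp_neg, norm_smul]

theorem DifferentiableAt.iteratedDeriv_comp_neg {x : ℝ}
    (h : DifferentiableAt ℝ (iteratedDeriv k f) (-x)) :
    DifferentiableAt ℝ (iteratedDeriv k (fun y => f (-y))) x := by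
  rw [funext (_root_.iteratedDeriv_comp_neg k f)]
  exact (h.comp x (differentiable_neg x)).const_smul _

theorem eqOn_zero_Ioo_of_iteratedDeriv_eq_zero [CompleteSpace E] {n N : ℕ} {a b C : ℝ}
    (hn : 0 < n) (ha : a < 0) (hb : 0 < b) (hC : 0 ≤ C)
    (hdiff : ∀ k, ∀ x ∈ Ioo a b, DifferentiableAt ℝ (iteratedDeriv k f) x)
    (hineq : ∀ x ∈ Ioo a b, x ≠ 0 → ‖iteratedDeriv n f x‖ ≤
      C * ∑ k ∈ range n, ‖iteratedDeriv k f x‖ / |x| ^ (n - k))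
    (hzero : ∀ j < N, iteratedDeriv j f 0 = 0)
    (hN : (∑ k ∈ range n, (1 : ℝ) / k !) * C + n - 1 < N) :
    EqOn f 0 (Ioo a b) := by
  have hBC : 0 ≤ (∑ k ∈ range n, (1 : ℝ) / k !) * C := by positivity
  have hnN : n < N + 1 := by exact_mod_cast (show (n : ℝ) < N + 1 by linarith)
  obtain ⟨m, rfl⟩ := Nat.exists_eq_add_of_le (Nat.lt_succ_iff.1 hnN)
  have hm : (∑ k ∈ range n, (1 : ℝ) / k !) * C < m + 1 := by push_cast at hN; linarith
  intro x hx
  rcases lt_trichotomy x 0 with hneg | rfl | hpos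
  · have h := eqOn_zero_Ioc_of_iteratedDeriv_eq_zero (f := fun y => f (-y)) (c := -x) hn hC
      (fun k t ht =>
        (hdiff k (-t) ⟨by linarith [hx.1, ht.2], by linarith [ht.1]⟩).iteratedDeriv_comp_neg)
      (fun t ht => by
        simp only [norm_iteratedDeriv_comp_neg]
        simpa only [abs_neg] using hineq (-t) ⟨by linarith [hx.1, ht.2], by linarith [ht.1]⟩
          (by linarith [ht.1]))
      (fun j hj => by rw [_root_.iteratedDeriv_comp_neg, neg_zero, hzero j hj, smul_zero]) hm
      (show -x ∈ Ioc 0 (-x) from ⟨by linarith, le_rfl⟩)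
    simpa using h
  · simpa using hzero 0 (by omega)
  · exact eqOn_zero_Ioc_of_iteratedDeriv_eq_zero hn hC
      (fun k t ht => hdiff k t ⟨by linarith [ht.1], by linarith [ht.2, hx.2]⟩)
      (fun t ht => hineq t ⟨by linarith [ht.1], by linarith [ht.2, hx.2]⟩ ht.1.ne') hzero hm
      ⟨hpos, le_rfl⟩

end

/-- Lemma 7 (Pan–Wang): a nontrivial smooth solution of the differential inequality
`‖f⁽ⁿ⁾(x)‖ ≤ C ∑_{k<n} ‖f⁽ᵏ⁾(x)‖/|x|^(n-k)` has finite vanishing order `N` at `0`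
with `N ≤ B_n C + n - 1`, where `B_n = ∑_{k<n} 1/k!`. -/
theorem finite_vanishing_order_bound
    (n : ℕ) (hn : 2 ≤ n) (a b : ℝ) (ha : a < 0) (hb : 0 < b)
    (C : ℝ) (hC : 0 ≤ C) (f : ℝ → ℂ)
    (hsmooth : ∀ k : ℕ, ∀ x ∈ Set.Ioo a b, DifferentiableAt ℝ (iteratedDeriv k f) x)
    (hineq : ∀ x ∈ Set.Ioo a b, x ≠ 0 →
      ‖iteratedDeriv n f x‖ ≤ C * ∑ k ∈ Finset.range n, ‖iteratedDeriv k f x‖ / |x| ^ (n - k))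
    (hne : ∃ x ∈ Set.Ioo a b, f x ≠ 0) :
    ∃ N : ℕ, iteratedDeriv N f 0 ≠ 0 ∧ (∀ j < N, iteratedDeriv j f 0 = 0) ∧
      (N : ℝ) ≤ (∑ k ∈ Finset.range n, (1 : ℝ) / k.factorial) * C + n - 1 := by
  obtain ⟨x₀, hx₀, hfx₀⟩ := hne
  have hvanish : ∀ N : ℕ, (∀ j < N, iteratedDeriv j f 0 = 0) →
      ¬ (∑ k ∈ range n, (1 : ℝ) / k !) * C + n - 1 < N := fun N hzero hN =>
    hfx₀ (eqOn_zero_Ioo_of_iteratedDeriv_eq_zero (by omega) ha hb hC hsmooth hineq hzero hN hx₀)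
  have hex : ∃ N, iteratedDeriv N f 0 ≠ 0 := by
    by_contra! hall
    obtain ⟨N, hN⟩ := exists_nat_gt ((∑ k ∈ range n, (1 : ℝ) / k !) * C + n - 1)
    exact hvanish N (fun j _ => hall j) hN
  classical
  have hmin : ∀ j < Nat.find hex, iteratedDeriv j f 0 = 0 :=
    fun j hj => not_not.1 (Nat.find_min hex hj)
  exact ⟨Nat.find hex, Nat.find_spec hex, hmin, not_lt.1 (hvanish _ hmin)⟩
end

section
/- Let n ≥ 2, a > 0, and let f : ℝ → ℂ be infinitely differentiable on (-a, a) and satisfy f⁽ⁿ⁾(x) + b_{n-1}(x)·f⁽ⁿ⁻¹⁾(x) + ⋯ + b_0(x)·f(x) = 0 for all x ∈ (-a, a) \ {0}, where b_k : ℝ → ℂ satisfy |b_k(x)| = O(1/|x|^{n-k}) as x → 0 for each k = 0, 1, …, n-1. Set C_n = max_{0 ≤ k ≤ n-1} limsup_{x → 0} |x|^{n-k}·|b_k(x)| and B_n = Σ_{k=0}^{n-1} 1/k!. If f⁽ᵏ⁾(0) = 0 for every integer k ≤ B_n·C_n + n - 1, then there exists δ > 0 such that f ≡ 0 on [-δ,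 δ]. -/
/-!
Let `q = ⌊B_n C_n⌋` and fix `C > C_n` with `B_n C < q + 1`; on a small interval `[-r, r]` the
coefficients satisfy `|x|^(n-k) |b_k(x)| ≤ C`. Since `f` vanishes to order `n - 1 + q` at `0`,
`|f⁽ⁿ⁻¹⁾(x)| ≤ K |x|^(q+1)` for some `K`. Integrating down from there gives
`|f⁽ᵏ⁾(x)| ≤ K |x|^(q+n-k) / (n-1-k)!`, the equation then gives `|f⁽ⁿ⁾(x)| ≤ B_n C K |x|^q`,
and integrating once more gives `|f⁽ⁿ⁻¹⁾(x)| ≤ θ K |x|^(q+1)` with `θ = B_n C / (q + 1) < 1`.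
Iterating, `f⁽ⁿ⁻¹⁾ = 0` on `[-r, r]`, hence so is `f`.
-/

open Filter Topology Set Finset
open scoped Nat

section Integration

variable {E : Type*} [NormedAddCommGroup E] [NormedSpace ℝ E]

lemma norm_le_of_norm_deriv_le_mul_pow {u v : ℝ → E} {r K : ℝ} {q : ℕ}
    (hu : u 0 = 0) (hd : ∀ t ∈ Icc 0 r, HasDerivAt u (v t) t)
    (hb : ∀ t ∈ Icc 0 r, ‖v t‖ ≤ K * t ^ q) :
    ∀ x ∈ Icc 0 r, ‖u x‖ ≤ K / (q + 1) * x ^ (q + 1) := by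
  refine image_norm_le_of_norm_deriv_right_le_deriv_boundary
    (B := fun x => K / (q + 1) * x ^ (q + 1)) (B' := fun x => K * x ^ q)
    (fun t ht => (hd t ht).continuousAt.continuousWithinAt)
    (fun t ht => (hd t (Ico_subset_Icc_self ht)).hasDerivWithinAt) (by simp [hu])
    (fun t => ?_) (fun t ht => hb t (Ico_subset_Icc_self ht))
  refine ((hasDerivAt_pow (q + 1) t).const_mul (K / (q + 1))).congr_deriv ?_
  field_simp
  simp

lemma norm_le_of_norm_deriv_le_mul_abs_pow {u v : ℝ → E} {r K : ℝ} {q : ℕ}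
    (hu : u 0 = 0) (hd : ∀ t ∈ Icc (-r) r, HasDerivAt u (v t) t)
    (hb : ∀ t ∈ Icc (-r) r, ‖v t‖ ≤ K * |t| ^ q) :
    ∀ x ∈ Icc (-r) r, ‖u x‖ ≤ K / (q + 1) * |x| ^ (q + 1) := by
  intro x ⟨hrx, hxr⟩
  have hmem {t : ℝ} (ht : t ∈ Icc 0 r) : t ∈ Icc (-r) r ∧ -t ∈ Icc (-r) r :=
    ⟨⟨by linarith [ht.1], ht.2⟩, ⟨by linarith [ht.2], by linarith [ht.1]⟩⟩
  rcases le_total 0 x with hx | hx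
  · rw [abs_of_nonneg hx]
    refine norm_le_of_norm_deriv_le_mul_pow hu (fun t ht => hd t (hmem ht).1)
      (fun t ht => ?_) x ⟨hx, hxr⟩
    simpa [abs_of_nonneg ht.1] using hb t (hmem ht).1
  · rw [abs_of_nonpos hx]
    have hreflect := norm_le_of_norm_deriv_le_mul_pow (r := r) (K := K) (q := q)
      (u := fun t => u (-t)) (v := fun t => -v (-t)) (by simpa using hu)
      (fun t ht => ?_) (fun t ht => ?_) (-x) ⟨by linarith, by linarith⟩
    · simpa using hreflect
    · simpa [Function.comp_def] using (hd (-t) (hmem ht).2).scomp t (hasDerivAt_neg t)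
    · simpa [abs_of_nonneg ht.1] using hb (-t) (hmem ht).2

lemma norm_le_div_factorial_mul_abs_pow_of_hasDerivAt_succ {g : ℕ → ℝ → E} {r K : ℝ}
    {q j : ℕ} (hK : 0 ≤ K) (hg : ∀ k, ∀ t ∈ Icc (-r) r, HasDerivAt (g k) (g (k + 1) t) t)
    (h0 : ∀ i < j, g i 0 = 0) (hb : ∀ t ∈ Icc (-r) r, ‖g j t‖ ≤ K * |t| ^ q) :
    ∀ x ∈ Icc (-r) r, ‖g 0 x‖ ≤ K / j ! * |x| ^ (q + j) := by
  induction j generalizing g with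
  | zero => simpa using hb
  | succ j ih =>
    have hshift := ih (g := fun i => g (i + 1)) (fun k => hg (k + 1))
      (fun i _ => h0 (i + 1) (by omega)) hb
    intro x hx
    calc ‖g 0 x‖ ≤ K / j ! / ((q + j : ℕ) + 1) * |x| ^ (q + j + 1) :=
          norm_le_of_norm_deriv_le_mul_abs_pow (h0 0 (by omega)) (hg 0) hshift x hx
      _ ≤ K / (j + 1)! * |x| ^ (q + (j + 1)) := by
          rw [← add_assoc, Nat.factorial_succ, Nat.cast_mul, div_div,
            mul_comm ((j + 1 : ℕ) : ℝ)]
          gcongr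
          push_cast
          linarith [(q.cast_nonneg : (0 : ℝ) ≤ q)]

end Integration

lemma eventually_forall_lt_le_of_limsup_lt {α : Type*} {l : Filter α} {u : ℕ → α → ℝ}
    {n : ℕ} {C : ℝ} (hu : ∀ k < n, IsBoundedUnder (· ≤ ·) l (u k))
    (hC : ∀ k < n, limsup (u k) l < C) : ∀ᶠ x in l, ∀ k < n, u k x ≤ C := by
  simp only [← Finset.mem_range, eventually_all_finset]
  exact fun k hk => (eventually_lt_of_limsup_lt (hC k (mem_range.1 hk))
    (hu k (mem_range.1 hk))).mono fun _ => le_of_lt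

section ODE

variable {g b : ℕ → ℝ → ℂ} {n q : ℕ} {r C : ℝ}

lemma norm_le_of_ode_of_weighted_bounds {x K : ℝ} (hK : 0 ≤ K)
    (hode : g n x + ∑ k ∈ range n, b k x * g k x = 0)
    (hb : ∀ k < n, |x| ^ (n - k) * ‖b k x‖ ≤ C)
    (hg : ∀ k < n, ‖g k x‖ ≤ K / (n - 1 - k)! * |x| ^ (q + (n - k))) :
    ‖g n x‖ ≤ (∑ j ∈ range n, (1 : ℝ) / j !) * C * K * |x| ^ q := by
  rw [eq_neg_of_add_eq_zero_left hode, norm_neg]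
  calc ‖∑ k ∈ range n, b k x * g k x‖ ≤ ∑ k ∈ range n, ‖b k x‖ * ‖g k x‖ := by
        simpa only [norm_mul] using norm_sum_le (range n) fun k => b k x * g k x
    _ ≤ ∑ k ∈ range n, C * (K / (n - 1 - k)! * |x| ^ q) := by
        refine sum_le_sum fun k hk => ?_
        have hk := mem_range.1 hk
        calc ‖b k x‖ * ‖g k x‖ ≤ ‖b k x‖ * (K / (n - 1 - k)! * |x| ^ (q + (n - k))) := by
              gcongr; exact hg k hk
          _ = (|x| ^ (n - k) * ‖b k x‖) * (K / (n - 1 - k)! * |x| ^ q) := by ring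
          _ ≤ C * (K / (n - 1 - k)! * |x| ^ q) := by gcongr; exact hb k hk
    _ = (∑ j ∈ range n, (1 : ℝ) / (n - 1 - j)!) * C * K * |x| ^ q := by
        rw [sum_mul, sum_mul, sum_mul]
        exact sum_congr rfl fun k _ => by ring
    _ = (∑ j ∈ range n, (1 : ℝ) / j !) * C * K * |x| ^ q := by
        rw [sum_range_reflect (fun j => (1 : ℝ) / j !) n]

lemma norm_le_contraction_of_ode (hr : 0 < r) (hn : 0 < n)
    (hg : ∀ k, ∀ t ∈ Icc (-r) r, HasDerivAt (g k) (g (k + 1) t) t)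
    (hode : ∀ x ∈ Icc (-r) r, x ≠ 0 → g n x + ∑ k ∈ range n, b k x * g k x = 0)
    (hb : ∀ x ∈ Icc (-r) r, x ≠ 0 → ∀ k < n, |x| ^ (n - k) * ‖b k x‖ ≤ C)
    (h0 : ∀ k < n, g k 0 = 0) {K : ℝ} (hK : 0 ≤ K)
    (hgK : ∀ x ∈ Icc (-r) r, ‖g (n - 1) x‖ ≤ K * |x| ^ (q + 1)) :
    ∀ x ∈ Icc (-r) r,
      ‖g (n - 1) x‖ ≤ (∑ j ∈ range n, (1 : ℝ) / j !) * C / (q + 1) * K * |x| ^ (q + 1) := by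
  set B := ∑ j ∈ range n, (1 : ℝ) / (j !)
  have hlower : ∀ x ∈ Icc (-r) r, ∀ k < n,
      ‖g k x‖ ≤ K / (n - 1 - k)! * |x| ^ (q + (n - k)) := by
    intro x hx k hk
    have := norm_le_div_factorial_mul_abs_pow_of_hasDerivAt_succ (g := fun i => g (k + i))
      (j := n - 1 - k) hK (fun i => hg (k + i)) (fun i _ => h0 _ (by omega))
      (by rwa [show k + (n - 1 - k) = n - 1 by omega]) x hx
    rwa [show q + 1 + (n - 1 - k) = q + (n - k) by omega] at this
  have hgn : ∀ x ∈ Icc (-r) r, x ≠ 0 → ‖g n x‖ ≤ B * C * K * |x| ^ q := fun x hx hx0 =>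
    norm_le_of_ode_of_weighted_bounds hK (hode x hx hx0) (hb x hx hx0) (hlower x hx)
  have hmem : (0 : ℝ) ∈ Icc (-r) r := ⟨by linarith, hr.le⟩
  have hgn0 : ‖g n 0‖ ≤ B * C * K * |(0 : ℝ)| ^ q := by
    refine le_of_tendsto_of_tendsto (b := 𝓝[≠] 0)
      ((hg n 0 hmem).continuousAt.norm.tendsto.mono_left nhdsWithin_le_nhds)
      (((continuous_abs.pow q).const_mul _).tendsto 0 |>.mono_left nhdsWithin_le_nhds) ?_
    filter_upwards [self_mem_nhdsWithin,
      mem_nhdsWithin_of_mem_nhds (Icc_mem_nhds (neg_lt_zero.2 hr) hr)] with t ht0 ht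
    exact hgn t ht ht0
  have hderiv : ∀ t ∈ Icc (-r) r, HasDerivAt (g (n - 1)) (g n t) t :=
    Nat.sub_add_cancel hn ▸ hg (n - 1)
  intro x hx
  calc ‖g (n - 1) x‖ ≤ B * C * K / (q + 1) * |x| ^ (q + 1) := by
        refine norm_le_of_norm_deriv_le_mul_abs_pow (h0 _ (by omega)) hderiv
          (fun t ht => ?_) x hx
        rcases eq_or_ne t 0 with rfl | ht0
        exacts [hgn0, hgn t ht ht0]
    _ = B * C / (q + 1) * K * |x| ^ (q + 1) := by ring

theorem eqOn_zero_of_ode (hr : 0 < r) (hn : 0 < n)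
    (hg : ∀ k, ∀ t ∈ Icc (-r) r, HasDerivAt (g k) (g (k + 1) t) t)
    (hode : ∀ x ∈ Icc (-r) r, x ≠ 0 → g n x + ∑ k ∈ range n, b k x * g k x = 0)
    (hb : ∀ x ∈ Icc (-r) r, x ≠ 0 → ∀ k < n, |x| ^ (n - k) * ‖b k x‖ ≤ C)
    (hC : 0 ≤ C) (hCq : (∑ j ∈ range n, (1 : ℝ) / j !) * C < q + 1)
    (h0 : ∀ k ≤ n - 1 + q, g k 0 = 0) :
    EqOn (g 0) 0 (Icc (-r) r) := by
  set θ := (∑ j ∈ range n, (1 : ℝ) / j !) * C / (q + 1)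
  have hθ0 : 0 ≤ θ := by positivity
  have hθ1 : θ < 1 := (div_lt_one (by positivity)).2 hCq
  obtain ⟨L, hL⟩ := isCompact_Icc.exists_bound_of_continuousOn
    fun t ht => (hg (n + q) t ht).continuousAt.continuousWithinAt
  have hL0 : 0 ≤ L := (norm_nonneg _).trans (hL 0 ⟨by linarith, hr.le⟩)
  have hstart : ∀ x ∈ Icc (-r) r, ‖g (n - 1) x‖ ≤ L / (q + 1)! * |x| ^ (q + 1) := by
    simpa using norm_le_div_factorial_mul_abs_pow_of_hasDerivAt_succ
      (g := fun i => g (n - 1 + i)) (q := 0) (j := q + 1) hL0 (fun i => hg (n - 1 + i))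
      (fun i _ => h0 _ (by omega)) (by simpa [show n - 1 + (q + 1) = n + q by omega] using hL)
  have hiterate : ∀ m : ℕ, ∀ x ∈ Icc (-r) r,
      ‖g (n - 1) x‖ ≤ θ ^ m * (L / (q + 1)!) * |x| ^ (q + 1) := by
    intro m
    induction m with
    | zero => simpa using hstart
    | succ m ih =>
      intro x hx
      have := norm_le_contraction_of_ode hr hn hg hode hb (fun k _ => h0 k (by omega))
        (by positivity) ih x hx
      convert this using 1
      ring
  have hpred : ∀ x ∈ Icc (-r) r, ‖g (n - 1) x‖ ≤ 0 * |x| ^ (q + 1) := fun x hx => by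
    simpa using ge_of_tendsto' (((tendsto_pow_atTop_nhds_zero_of_lt_one hθ0 hθ1).mul_const
      (L / (q + 1)!)).mul_const (|x| ^ (q + 1))) (hiterate · x hx)
  intro x hx
  simpa using norm_le_div_factorial_mul_abs_pow_of_hasDerivAt_succ le_rfl hg
    (fun i _ => h0 i (by omega)) hpred x hx

end ODE

/-- Proposition 8 (Pan–Wang): if `|b_k(x)| = O(1/|x|^(n-k))` as `x → 0` and
`f⁽ᵏ⁾(0) = 0` for every `k ≤ B_n C_n + n - 1`, where `C_n` is the largest of the
limsups of `|x|^(n-k) |b_k(x)|`, then `f ≡ 0` near `0`. -/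
theorem uniqueness_bigO
    (n : ℕ) (hn : 2 ≤ n) (a : ℝ) (ha : 0 < a)
    (f : ℝ → ℂ) (b : ℕ → ℝ → ℂ)
    (hsmooth : ∀ k : ℕ, ∀ x ∈ Set.Ioo (-a) a, DifferentiableAt ℝ (iteratedDeriv k f) x)
    (hode : ∀ x ∈ Set.Ioo (-a) a, x ≠ 0 →
      iteratedDeriv n f x + ∑ k ∈ Finset.range n, b k x * iteratedDeriv k f x = 0)
    (hO : ∀ k < n, Filter.IsBoundedUnder (· ≤ ·) (𝓝[≠] (0 : ℝ))
      (fun x : ℝ => |x| ^ (n - k) * ‖b k x‖))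
    (Cn : ℝ)
    (hCn : Cn = (Finset.range n).sup' (Finset.nonempty_range_iff.mpr (by omega))
      (fun k => Filter.limsup (fun x : ℝ => |x| ^ (n - k) * ‖b k x‖) (𝓝[≠] (0 : ℝ))))
    (hinit : ∀ k : ℕ,
      (k : ℝ) ≤ (∑ j ∈ Finset.range n, (1 : ℝ) / j.factorial) * Cn + n - 1 →
      iteratedDeriv k f 0 = 0) :
    ∃ δ > 0, ∀ x ∈ Set.Icc (-δ) δ, f x = 0 := by
  set B := ∑ j ∈ range n, (1 : ℝ) / (j !)
  have hB : 0 < B := sum_pos (fun j _ => by positivity) (nonempty_range_iff.2 (by omega))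
  have hlimsup : ∀ k < n, limsup (fun x : ℝ => |x| ^ (n - k) * ‖b k x‖) (𝓝[≠] 0) ≤ Cn :=
    fun k hk => hCn ▸ le_sup' (fun k => limsup (fun x : ℝ => |x| ^ (n - k) * ‖b k x‖) (𝓝[≠] 0))
      (mem_range.2 hk)
  have hCn0 : 0 ≤ Cn := (le_limsup_of_frequently_le
    (Frequently.of_forall fun x => by positivity) (hO 0 (by omega))).trans (hlimsup 0 (by omega))
  set q := ⌊B * Cn⌋₊
  have hvanish : ∀ k ≤ n - 1 + q, iteratedDeriv k f 0 = 0 := fun k hk => hinit k <| by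
    have hq : (q : ℝ) ≤ B * Cn := Nat.floor_le (by positivity)
    have hk' : (k : ℝ) + 1 ≤ n + q := by exact_mod_cast (by omega : k + 1 ≤ n + q)
    linarith
  obtain ⟨C, hCnC, hCq⟩ : ∃ C, Cn < C ∧ C < (q + 1) / B :=
    exists_between ((lt_div_iff₀ hB).2 (by linarith [Nat.lt_floor_add_one (B * Cn)]))
  have hnear : ∀ᶠ x in 𝓝 (0 : ℝ),
      x ∈ Ioo (-a) a ∧ (x ≠ 0 → ∀ k < n, |x| ^ (n - k) * ‖b k x‖ ≤ C) :=
    Eventually.and (Ioo_mem_nhds (neg_lt_zero.2 ha) ha) <| eventually_nhdsWithin_iff.1 <|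
      eventually_forall_lt_le_of_limsup_lt hO fun k hk => (hlimsup k hk).trans_lt hCnC
  obtain ⟨r, hr, hrP⟩ := Metric.nhds_basis_closedBall.eventually_iff.1 hnear
  simp only [Real.closedBall_eq_Icc, zero_sub, zero_add] at hrP
  have hzero := eqOn_zero_of_ode (g := fun k => iteratedDeriv k f) hr (by omega)
    (fun k t ht => by rw [iteratedDeriv_succ]; exact (hsmooth k t (hrP ht).1).hasDerivAt)
    (fun x hx => hode x (hrP hx).1) (fun x hx => (hrP hx).2) (hCn0.trans hCnC.le)
    ((lt_div_iff₀' hB).1 hCq) hvanish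
  exact ⟨r, hr, fun x hx => by simpa using hzero hx⟩
end

section
/- Fix α ∈ (0, 1) and define y : ℝ → ℝ by y(x) = x^α · sin(x) for x ≥ 0 and y(x) = (-x)^α · sin(-x) for x < 0 (equivalently y(x) = |x|^α · sin|x|). Then: (i) y is continuously differentiable on ℝ with y(0) = y'(0) = 0; (ii) for every x ≠ 0, y''(x) - (2α/x)·y'(x) + (1 + (α² + α)/x²)·y(x) = 0; (iii) y is not identically zero on any interval [-δ, δ] with δ > 0. -/
open Filter Topology Real

/-!
Since `|x| sin |x| = x sin x`, we have `y x = |x| ^ (α - 1) * (x sin x)`. Away from `0` the factor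
`|x| ^ p` has derivative `p |x| ^ (p - 2) x`, so `y'` and `y''` are `|x| ^ (α - 3)` times
polynomials in `x`, `sin x`, `cos x`, and the equation becomes a polynomial identity.
Both `y` and `y' = |x| ^ (α - 1) (α sin x + x cos x)` are `O(|x| ^ α)` at `0`, hence continuous
there with value `0`, and the derivative-extension theorem makes `y` differentiable at `0` with
`y' 0 = 0`. Finally `y > 0` on `(0, π)`.
-/

lemma abs_rpow_sub_two_mul_sq (p : ℝ) {x : ℝ} (hx : x ≠ 0) : |x| ^ (p - 2) * x ^ 2 = |x| ^ p := by
  rw [← sq_abs, ← rpow_natCast, ← rpow_add (abs_pos.2 hx)]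
  norm_num

lemma hasDerivAt_abs_rpow_of_ne_zero (p : ℝ) {x : ℝ} (hx : x ≠ 0) :
    HasDerivAt (fun t => |t| ^ p) (p * |x| ^ (p - 2) * x) x := by
  convert (hasDerivAt_abs hx).rpow_const (p := p) (Or.inl (abs_ne_zero.2 hx)) using 1
  rw [show p - 1 = p - 2 + 1 by ring, rpow_add_one (abs_ne_zero.2 hx)]
  linear_combination (-(p * |x| ^ (p - 2))) * sign_mul_abs x

lemma abs_mul_sin_le_abs (x : ℝ) : |x * sin x| ≤ |x| := by
  rw [abs_mul]
  exact mul_le_of_le_one_right (abs_nonneg x) (abs_sin_le_one x)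

lemma abs_mul_sin_add_mul_cos_le {α : ℝ} (hα : 0 ≤ α) (x : ℝ) :
    |α * sin x + x * cos x| ≤ (α + 1) * |x| :=
  calc |α * sin x + x * cos x| ≤ α * |sin x| + |x| * |cos x| := by
        simpa [abs_mul, abs_of_nonneg hα] using abs_add_le (α * sin x) (x * cos x)
    _ ≤ α * |x| + |x| * 1 :=
        add_le_add (mul_le_mul_of_nonneg_left abs_sin_le_abs hα)
          (mul_le_mul_of_nonneg_left (abs_cos_le_one x) (abs_nonneg x))
    _ = (α + 1) * |x| := by ring

lemma tendsto_abs_rpow_sub_one_mul_nhds_zero {α C : ℝ} (hα : 0 < α) {v : ℝ → ℝ}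
    (hv : ∀ x, |v x| ≤ C * |x|) :
    Tendsto (fun x => |x| ^ (α - 1) * v x) (𝓝 0) (𝓝 0) := by
  have hlim : Tendsto (fun x : ℝ => C * |x| ^ α) (𝓝 0) (𝓝 0) := by
    have : Continuous fun x : ℝ => C * |x| ^ α := by
      fun_prop (disch := exact hα.le)
    simpa [zero_rpow hα.ne'] using this.tendsto 0
  refine squeeze_zero_norm (fun x => ?_) hlim
  rcases eq_or_ne x 0 with rfl | hx
  · have : v 0 = 0 := abs_nonpos_iff.1 (by simpa using hv 0)
    simp [this, zero_rpow hα.ne']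
  · calc ‖|x| ^ (α - 1) * v x‖ = |x| ^ (α - 1) * |v x| := by
          rw [norm_mul, norm_of_nonneg (rpow_nonneg (abs_nonneg x) _), Real.norm_eq_abs]
      _ ≤ |x| ^ (α - 1) * (C * |x|) := by gcongr; exact hv x
      _ = C * |x| ^ α := by rw [rpow_sub_one (abs_ne_zero.2 hx)]; field_simp

lemma abs_mul_sin_abs (x : ℝ) : |x| * sin |x| = x * sin x := by
  rcases abs_choice x with h | h <;> rw [h]
  rw [sin_neg]; ring

lemma abs_rpow_mul_sin_abs_eq (α x : ℝ) : |x| ^ α * sin |x| = |x| ^ (α - 1) * (x * sin x) := by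
  rcases eq_or_ne x 0 with rfl | hx
  · simp
  · rw [← abs_mul_sin_abs, rpow_sub_one (abs_ne_zero.2 hx)]
    field_simp

lemma hasDerivAt_abs_rpow_sub_one_mul_mul_sin_of_ne_zero (α : ℝ) {x : ℝ} (hx : x ≠ 0) :
    HasDerivAt (fun t => |t| ^ (α - 1) * (t * sin t))
      (|x| ^ (α - 1) * (α * sin x + x * cos x)) x := by
  refine ((hasDerivAt_abs_rpow_of_ne_zero (α - 1) hx).mul
    ((hasDerivAt_id' x).mul (hasDerivAt_sin x))).congr_deriv ?_
  rw [← abs_rpow_sub_two_mul_sq (α - 1) hx]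
  simp only [Pi.mul_apply]
  ring

lemma hasDerivAt_abs_rpow_sub_one_mul_sin_add_mul_cos (α : ℝ) {x : ℝ} (hx : x ≠ 0) :
    HasDerivAt (fun t => |t| ^ (α - 1) * (α * sin t + t * cos t))
      (|x| ^ (α - 1 - 2) * x * ((α - 1) * (α * sin x + x * cos x)
        + x * ((α + 1) * cos x - x * sin x))) x := by
  refine ((hasDerivAt_abs_rpow_of_ne_zero (α - 1) hx).mul
    (((hasDerivAt_sin x).const_mul α).add
      ((hasDerivAt_id' x).mul (hasDerivAt_cos x)))).congr_deriv ?_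
  rw [← abs_rpow_sub_two_mul_sq (α - 1) hx]
  simp only [Pi.add_apply, Pi.mul_apply]
  ring

lemma continuous_abs_rpow_sub_one_mul_sin_add_mul_cos {α : ℝ} (hα : 0 < α) :
    Continuous fun x => |x| ^ (α - 1) * (α * sin x + x * cos x) := by
  refine continuous_iff_continuousAt.2 fun x => ?_
  rcases eq_or_ne x 0 with rfl | hx
  · simpa [ContinuousAt] using
      tendsto_abs_rpow_sub_one_mul_nhds_zero hα (abs_mul_sin_add_mul_cos_le hα.le)
  · exact (hasDerivAt_abs_rpow_sub_one_mul_sin_add_mul_cos α hx).continuousAt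

lemma hasDerivAt_abs_rpow_sub_one_mul_mul_sin {α : ℝ} (hα : 0 < α) (x : ℝ) :
    HasDerivAt (fun t => |t| ^ (α - 1) * (t * sin t))
      (|x| ^ (α - 1) * (α * sin x + x * cos x)) x := by
  refine hasDerivAt_of_hasDerivAt_of_ne'
    (fun x hx => hasDerivAt_abs_rpow_sub_one_mul_mul_sin_of_ne_zero α hx) ?_
    (continuous_abs_rpow_sub_one_mul_sin_add_mul_cos hα).continuousAt x
  simpa [ContinuousAt] using tendsto_abs_rpow_sub_one_mul_nhds_zero (C := 1) hα
    fun x => by simpa using abs_mul_sin_le_abs x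

/-- Example 4 (Pan–Wang): for `α ∈ (0,1)`, the function `y(x) = |x|^α sin|x|` is `C¹`
on `ℝ`, satisfies `y(0) = y'(0) = 0`, solves
`y'' - (2α/x) y' + (1 + (α² + α)/x²) y = 0` for all `x ≠ 0`, and is not
identically zero on any interval `[-δ, δ]`. -/
theorem example_not_smooth
    (α : ℝ) (hα : α ∈ Set.Ioo (0 : ℝ) 1)
    (y : ℝ → ℝ) (hy : ∀ x : ℝ, y x = |x| ^ α * Real.sin |x|) :
    ContDiff ℝ 1 y ∧ y 0 = 0 ∧ deriv y 0 = 0 ∧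
    (∀ x : ℝ, x ≠ 0 →
      deriv (deriv y) x - (2 * α / x) * deriv y x + (1 + (α ^ 2 + α) / x ^ 2) * y x = 0) ∧
    (∀ δ > (0 : ℝ), ∃ x ∈ Set.Icc (-δ) δ, y x ≠ 0) := by
  have hα0 : 0 < α := hα.1
  obtain rfl : y = fun x => |x| ^ (α - 1) * (x * sin x) :=
    funext fun x => (hy x).trans (abs_rpow_mul_sin_abs_eq α x)
  have hy_deriv := hasDerivAt_abs_rpow_sub_one_mul_mul_sin hα0
  have hderiv := funext fun x => (hy_deriv x).deriv
  refine ⟨contDiff_one_iff_deriv.2 ⟨fun x => (hy_deriv x).differentiableAt,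
    hderiv ▸ continuous_abs_rpow_sub_one_mul_sin_add_mul_cos hα0⟩,
    by simp, by simp [hderiv], fun x hx => ?_, fun δ hδ => ?_⟩
  · rw [hderiv, (hasDerivAt_abs_rpow_sub_one_mul_sin_add_mul_cos α hx).deriv]
    beta_reduce
    rw [← abs_rpow_sub_two_mul_sq (α - 1) hx]
    field_simp
    ring
  · have hx0 : 0 < min δ 1 := lt_min hδ one_pos
    have hxπ : min δ 1 < π := (min_le_right δ 1).trans_lt (by linarith [pi_gt_three])
    refine ⟨min δ 1, ⟨by linarith, min_le_left δ 1⟩, ?_⟩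
    rw [hy, abs_of_pos hx0]
    exact (mul_pos (rpow_pos_of_pos hx0 α) (sin_pos_of_pos_of_lt_pi hx0 hxπ)).ne'
end

section
/- Let α = 1/(2e) and consider the ODE y''(x) + a_1(x)·y'(x) + a_0(x)·y(x) = 0 on ℝ \ {0} with a_1(x) = -2α/x and a_0(x) = 1 + (α² + α)/x². Then lim_{x → 0} |x|·|a_1(x)| = 1/e and lim_{x → 0} |x|²·|a_0(x)| = (1/(2e))·(1 + 1/(2e)) < 1/e, yet this ODE admits a continuously differentiable solution y on ℝ with y(0) = y'(0) = 0 that is not identically zero on any neighborhood of 0, namely y(x) = |x|^α · sin|x|. Hence solutions with zero initial data at 0 are not unique in the class C¹ (equivalently, in the Hölder class C^{1,α}). -/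
/-! Away from `0`, `y(x) = g(|x|)` with `g(s) = s^α sin s`, so `y'(x) = sign x · g'(|x|)` and
`y''(x) = g''(|x|)`; as `sign x / x = 1 / |x|`, the equation at `x` is the identity
`g'' - (2α/s) g' + (1 + (α² + α)/s²) g = 0` at `s = |x|`. Since `|sin s| ≤ s`, both the difference
quotient of `y` at `0` and `y'` are `O(|x|^α)`, whence `y ∈ C¹` with `y'(0) = 0`. -/

open Filter Topology

section
open Real

variable (a : ℝ)

noncomputable def rpowSinDeriv (s : ℝ) : ℝ := a * s ^ (a - 1) * sin s + s ^ a * cos s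

noncomputable def rpowSinDeriv2 (s : ℝ) : ℝ :=
  a * (a - 1) * s ^ (a - 2) * sin s + 2 * a * s ^ (a - 1) * cos s - s ^ a * sin s

theorem hasDerivAt_rpow_mul_sin {s : ℝ} (hs : s ≠ 0) :
    HasDerivAt (fun t => t ^ a * sin t) (rpowSinDeriv a s) s :=
  (hasDerivAt_rpow_const (Or.inl hs)).mul (hasDerivAt_sin s)

theorem hasDerivAt_rpowSinDeriv {s : ℝ} (hs : s ≠ 0) :
    HasDerivAt (rpowSinDeriv a) (rpowSinDeriv2 a s) s := by
  have hpow : HasDerivAt (fun t => t ^ (a - 1)) ((a - 1) * s ^ (a - 2)) s := by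
    convert hasDerivAt_rpow_const (p := a - 1) (Or.inl hs) using 3; ring
  refine (((hpow.const_mul a).mul (hasDerivAt_sin s)).add
    ((hasDerivAt_rpow_const (Or.inl hs)).mul (hasDerivAt_cos s))).congr_deriv ?_
  unfold rpowSinDeriv2; ring

theorem rpowSinDeriv2_sub_add_eq_zero {s : ℝ} (hs : 0 < s) :
    rpowSinDeriv2 a s - 2 * a / s * rpowSinDeriv a s
      + (1 + (a ^ 2 + a) / s ^ 2) * (s ^ a * sin s) = 0 := by
  have h1 : s ^ (a - 1) = s ^ (a - 2) * s := by
    rw [← rpow_add_one hs.ne']; ring_nf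
  have h0 : s ^ a = s ^ (a - 2) * s ^ 2 := by
    rw [← rpow_add_natCast hs.ne']; norm_num
  unfold rpowSinDeriv rpowSinDeriv2
  rw [h0, h1]
  field_simp
  ring

theorem abs_rpowSinDeriv_le {a : ℝ} (ha : 0 ≤ a) {s : ℝ} (hs : 0 < s) :
    |rpowSinDeriv a s| ≤ (a + 1) * s ^ a := by
  have h1 : s ^ a = s ^ (a - 1) * s := by
    rw [← rpow_add_one hs.ne']; ring_nf
  have hpow : 0 ≤ s ^ (a - 1) := rpow_nonneg hs.le _
  have hsin : |sin s| ≤ s := by simpa [abs_of_pos hs] using abs_sin_le_abs (x := s)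
  calc |rpowSinDeriv a s| ≤ a * s ^ (a - 1) * |sin s| + s ^ a * |cos s| := by
        unfold rpowSinDeriv
        refine (abs_add_le _ _).trans_eq ?_
        rw [abs_mul, abs_mul, abs_mul, abs_of_nonneg ha, abs_of_nonneg hpow,
          abs_of_nonneg (rpow_nonneg hs.le a)]
    _ ≤ a * s ^ (a - 1) * s + s ^ a * 1 := by
        gcongr
        exact abs_cos_le_one s
    _ = (a + 1) * s ^ a := by rw [h1]; ring

theorem hasDerivAt_abs_rpow_mul_sin_abs {x : ℝ} (hx : x ≠ 0) :
    HasDerivAt (fun t => |t| ^ a * sin |t|) (SignType.sign x * rpowSinDeriv a |x|) x := by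
  rw [mul_comm]
  exact (hasDerivAt_rpow_mul_sin a (abs_ne_zero.mpr hx)).comp x (hasDerivAt_abs hx)

theorem tendsto_abs_rpow_nhds_zero {a : ℝ} (ha : 0 < a) :
    Tendsto (fun t : ℝ => |t| ^ a) (𝓝 0) (𝓝 0) :=
  (continuous_abs.rpow_const fun _ => Or.inr ha.le).tendsto' 0 0 (by simp [ha.ne'])

theorem hasDerivAt_abs_rpow_mul_sin_abs_zero {a : ℝ} (ha : 0 < a) :
    HasDerivAt (fun t => |t| ^ a * sin |t|) 0 0 := by
  rw [hasDerivAt_iff_tendsto_slope_zero]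
  refine squeeze_zero_norm (fun t => ?_) ((tendsto_abs_rpow_nhds_zero ha).mono_left
    nhdsWithin_le_nhds)
  rcases eq_or_ne t 0 with rfl | ht
  · simp [zero_rpow ha.ne']
  have hsin : abs (sin |t|) ≤ |t| := by simpa using abs_sin_le_abs (x := |t|)
  simp only [zero_add, abs_zero, zero_rpow ha.ne', zero_mul, sub_zero, smul_eq_mul, norm_mul,
    norm_inv, Real.norm_eq_abs, abs_of_nonneg (rpow_nonneg (abs_nonneg t) a)]
  rw [inv_mul_le_iff₀ (abs_pos.mpr ht), mul_comm |t|]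
  exact mul_le_mul_of_nonneg_left hsin (rpow_nonneg (abs_nonneg t) a)

theorem hasDerivAt_sign_mul_rpowSinDeriv_abs {x : ℝ} (hx : x ≠ 0) :
    HasDerivAt (fun t => SignType.sign t * rpowSinDeriv a |t|) (rpowSinDeriv2 a |x|) x := by
  have hsign : (fun t => SignType.sign t * rpowSinDeriv a |t|) =ᶠ[𝓝 x]
      fun t => SignType.sign x * rpowSinDeriv a |t| := by
    rcases hx.lt_or_gt with hx | hx
    · filter_upwards [eventually_lt_nhds hx] with t ht using by simp [ht, hx]
    · filter_upwards [eventually_gt_nhds hx] with t ht using by simp [ht, hx]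
  refine (((hasDerivAt_rpowSinDeriv a (abs_ne_zero.mpr hx)).comp x (hasDerivAt_abs hx)).const_mul
    (SignType.sign x : ℝ)).congr_of_eventuallyEq hsign |>.congr_deriv ?_
  rcases hx.lt_or_gt with hx | hx <;> simp [hx]

theorem deriv_abs_rpow_mul_sin_abs {a : ℝ} (ha : 0 < a) :
    deriv (fun t => |t| ^ a * sin |t|) = fun x => SignType.sign x * rpowSinDeriv a |x| := by
  ext x
  rcases eq_or_ne x 0 with rfl | hx
  · simpa using (hasDerivAt_abs_rpow_mul_sin_abs_zero ha).deriv
  · exact (hasDerivAt_abs_rpow_mul_sin_abs a hx).deriv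

theorem continuous_sign_mul_rpowSinDeriv_abs {a : ℝ} (ha : 0 < a) :
    Continuous fun x => SignType.sign x * rpowSinDeriv a |x| := by
  refine continuous_iff_continuousAt.mpr fun x => ?_
  rcases eq_or_ne x 0 with rfl | hx
  · refine tendsto_iff_norm_sub_tendsto_zero.mpr <| squeeze_zero (fun _ => norm_nonneg _)
      (fun t => ?_) (by simpa using (tendsto_abs_rpow_nhds_zero ha).const_mul (a + 1))
    rcases lt_trichotomy t 0 with ht | rfl | ht
    · simpa [ht] using abs_rpowSinDeriv_le ha.le (abs_pos.mpr ht.ne)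
    · simp [zero_rpow ha.ne']
    · simpa [ht] using abs_rpowSinDeriv_le ha.le (abs_pos.mpr ht.ne')
  · exact (hasDerivAt_sign_mul_rpowSinDeriv_abs a hx).continuousAt

theorem contDiff_one_abs_rpow_mul_sin_abs {a : ℝ} (ha : 0 < a) :
    ContDiff ℝ 1 fun t => |t| ^ a * sin |t| := by
  refine contDiff_one_iff_deriv.mpr ⟨fun x => ?_, ?_⟩
  · rcases eq_or_ne x 0 with rfl | hx
    · exact (hasDerivAt_abs_rpow_mul_sin_abs_zero ha).differentiableAt
    · exact (hasDerivAt_abs_rpow_mul_sin_abs a hx).differentiableAt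
  · rw [deriv_abs_rpow_mul_sin_abs ha]
    exact continuous_sign_mul_rpowSinDeriv_abs ha

theorem abs_rpow_mul_sin_abs_ode {a : ℝ} (ha : 0 < a) {x : ℝ} (hx : x ≠ 0) :
    deriv (deriv fun t => |t| ^ a * sin |t|) x + -2 * a / x * deriv (fun t => |t| ^ a * sin |t|) x
      + (1 + (a ^ 2 + a) / x ^ 2) * (|x| ^ a * sin |x|) = 0 := by
  rw [deriv_abs_rpow_mul_sin_abs ha, (hasDerivAt_sign_mul_rpowSinDeriv_abs a hx).deriv]
  have h := rpowSinDeriv2_sub_add_eq_zero a (abs_pos.mpr hx)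
  rcases hx.lt_or_gt with hx | hx
  · simp only [sign_neg hx, SignType.coe_neg_one, abs_of_neg hx, even_two, Even.neg_pow] at h ⊢
    linear_combination h
  · simp only [sign_pos hx, SignType.coe_one, abs_of_pos hx] at h ⊢
    linear_combination h

theorem exists_abs_rpow_mul_sin_abs_ne_zero {δ : ℝ} (hδ : 0 < δ) :
    ∃ x ∈ Set.Icc (-δ) δ, |x| ^ a * sin |x| ≠ 0 := by
  have hx : 0 < min δ 1 := lt_min hδ one_pos
  have hxπ : min δ 1 < π := (min_le_right δ 1).trans_lt (by linarith [pi_gt_three])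
  refine ⟨min δ 1, ⟨by linarith, min_le_left δ 1⟩, ?_⟩
  rw [abs_of_pos hx]
  exact (mul_pos (rpow_pos_of_pos hx a) (sin_pos_of_pos_of_lt_pi hx hxπ)).ne'

end

theorem tendsto_abs_mul_abs_div_nhdsNE (c : ℝ) :
    Tendsto (fun x : ℝ => |x| * |c / x|) (𝓝[≠] 0) (𝓝 |c|) := by
  refine tendsto_const_nhds.congr' (eventually_nhdsWithin_of_forall fun x (hx : x ≠ 0) => ?_)
  dsimp only
  rw [abs_div, mul_div_cancel₀ _ (abs_ne_zero.mpr hx)]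

theorem tendsto_sq_abs_mul_abs_one_add_div_sq_nhdsNE {c : ℝ} (hc : 0 ≤ c) :
    Tendsto (fun x : ℝ => |x| ^ 2 * |1 + c / x ^ 2|) (𝓝[≠] 0) (𝓝 c) := by
  have hlim : Tendsto (fun x : ℝ => x ^ 2 + c) (𝓝[≠] 0) (𝓝 c) := by
    refine Tendsto.mono_left ?_ nhdsWithin_le_nhds
    exact (by fun_prop : Continuous fun x : ℝ => x ^ 2 + c).tendsto' 0 c (by simp)
  refine hlim.congr' (eventually_nhdsWithin_of_forall fun x (hx : x ≠ 0) => ?_)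
  dsimp only
  rw [sq_abs, ← abs_of_nonneg (sq_nonneg x), ← abs_mul, abs_sq, mul_add, mul_one,
    mul_div_cancel₀ _ (pow_ne_zero 2 hx), abs_of_nonneg (by positivity)]

theorem one_div_two_mul_mul_one_add_lt {c : ℝ} (hc : 1 / 2 < c) :
    1 / (2 * c) * (1 + 1 / (2 * c)) < 1 / c := by
  have hc0 : 0 < c := by linarith
  rw [div_mul_eq_mul_div, one_mul, div_lt_div_iff₀ (by positivity) hc0, ← sub_pos]
  field_simp
  linarith

/-- Example 4 with `α = 1/(2e)` (Pan–Wang): the coefficient limits of the ODE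
`y'' - (2α/x) y' + (1 + (α²+α)/x²) y = 0` satisfy the bound `≤ 1/e` of Theorem 1,
yet `y(x) = |x|^α sin|x|` is a `C¹` (not `C^∞`) solution with zero initial data which is
not identically zero near `0`: uniqueness fails in the class `C¹`. -/
theorem example_e_bound_nonuniqueness
    (e α : ℝ) (he : e = Real.exp 1) (hα : α = 1 / (2 * e))
    (a1 a0 y : ℝ → ℝ)
    (ha1 : ∀ x : ℝ, a1 x = -2 * α / x)
    (ha0 : ∀ x : ℝ, a0 x = 1 + (α ^ 2 + α) / x ^ 2)
    (hy : ∀ x : ℝ, y x = |x| ^ α * Real.sin |x|) :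
    Filter.Tendsto (fun x : ℝ => |x| * |a1 x|) (𝓝[≠] (0 : ℝ)) (𝓝 (1 / e)) ∧
    Filter.Tendsto (fun x : ℝ => |x| ^ 2 * |a0 x|) (𝓝[≠] (0 : ℝ))
      (𝓝 ((1 / (2 * e)) * (1 + 1 / (2 * e)))) ∧
    (1 / (2 * e)) * (1 + 1 / (2 * e)) < 1 / e ∧
    ContDiff ℝ 1 y ∧ y 0 = 0 ∧ deriv y 0 = 0 ∧
    (∀ x : ℝ, x ≠ 0 → deriv (deriv y) x + a1 x * deriv y x + a0 x * y x = 0) ∧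
    (∀ δ > (0 : ℝ), ∃ x ∈ Set.Icc (-δ) δ, y x ≠ 0) := by
  have he2 : 1 / 2 < e := by rw [he]; linarith [Real.add_one_le_exp 1]
  have hα0 : 0 < α := by rw [hα]; positivity
  obtain rfl : y = fun x => |x| ^ α * Real.sin |x| := funext hy
  refine ⟨?_, ?_, one_div_two_mul_mul_one_add_lt he2, contDiff_one_abs_rpow_mul_sin_abs hα0,
    by simp [Real.zero_rpow hα0.ne'], by simp [deriv_abs_rpow_mul_sin_abs hα0],
    fun x hx => by simpa only [ha1, ha0] using abs_rpow_mul_sin_abs_ode hα0 hx,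
    fun δ hδ => exists_abs_rpow_mul_sin_abs_ne_zero α hδ⟩
  · have h2α : |-2 * α| = 1 / e := by rw [abs_of_neg (by linarith), hα]; field_simp
    simpa only [ha1, h2α] using tendsto_abs_mul_abs_div_nhdsNE (-2 * α)
  · rw [show 1 / (2 * e) * (1 + 1 / (2 * e)) = α ^ 2 + α by rw [hα]; ring]
    simpa only [ha0] using
      tendsto_sq_abs_mul_abs_one_add_div_sq_nhdsNE (c := α ^ 2 + α) (by positivity)
end

section
/- Let n ≥ 2, a > 0, and let a_0, a_1, …, a_{n-1} be complex constants with |a_k| ≤ 1/e for every k. Let f : ℝ → ℂ be infinitely differentiable on (-a, a) and satisfy the Cauchy–Euler (equi-dimensional) equation xⁿ f⁽ⁿ⁾(x) + Σ_{k=0}^{n-1} a_k·xᵏ·f⁽ᵏ⁾(x) = 0 for all x ∈ (-a, a), with f(0) = f'(0) = ⋯ = f⁽ⁿ⁻¹⁾(0) = 0. Then there exists δ > 0 such that f ≡ 0 on [-δ, δ]. -/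
open Filter Topology

private lemma two_pow_le_fact (j : ℕ) : 2 ^ j ≤ (j + 1).factorial := by
  induction j with
  | zero => simp
  | succ j ih =>
      rw [pow_succ, Nat.factorial_succ]
      calc 2 ^ j * 2 ≤ (j + 1).factorial * (j + 1 + 1) := Nat.mul_le_mul ih (by omega)
        _ = (j + 1 + 1) * (j + 1).factorial := mul_comm _ _

private lemma cauchy_euler_one_sided
    (n : ℕ) (hn : 2 ≤ n) (a : ℝ) (ha : 0 < a)
    (c : ℕ → ℂ) (hc : ∀ k < n, ‖c k‖ ≤ 1 / Real.exp 1)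
    (f : ℝ → ℂ)
    (hsmooth : ∀ k : ℕ, ∀ x ∈ Set.Ioo (-a) a, DifferentiableAt ℝ (iteratedDeriv k f) x)
    (hode : ∀ x ∈ Set.Ioo (-a) a,
      (x : ℂ) ^ n * iteratedDeriv n f x
        + ∑ k ∈ Finset.range n, c k * (x : ℂ) ^ k * iteratedDeriv k f x = 0)
    (hinit : ∀ k < n, iteratedDeriv k f 0 = 0) :
    ∀ x ∈ Set.Icc (0 : ℝ) (a / 2), f x = 0 := by
  have hδ : 0 < a / 2 := by linarith
  set δ := a / 2 with hδdef
  have hsub : Set.Icc (0 : ℝ) δ ⊆ Set.Ioo (-a) a := by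
    intro t ht
    rcases ht with ⟨ht1, ht2⟩
    constructor <;> simp only [hδdef] at ht2 ⊢ <;> linarith
  -- Taylor-type bound
  have key : ∀ M : ℝ, (∀ t ∈ Set.Icc (0 : ℝ) δ, ‖iteratedDeriv n f t‖ ≤ M) →
      ∀ m, m ≤ n → ∀ x ∈ Set.Icc (0 : ℝ) δ,
        ‖iteratedDeriv (n - m) f x‖ ≤ M * x ^ m / (m.factorial : ℝ) := by
    intro M hM m
    induction m with
    | zero => intro _ x hx; simpa using hM x hx
    | succ m ih =>
        intro hm x hx
        have hm' : m ≤ n := by omega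
        have hcont : ContinuousOn (iteratedDeriv (n - (m + 1)) f) (Set.Icc 0 δ) :=
          fun t ht => ((hsmooth _ t (hsub ht)).continuousAt).continuousWithinAt
        have hder : ∀ t ∈ Set.Ico (0 : ℝ) δ,
            HasDerivWithinAt (iteratedDeriv (n - (m + 1)) f)
              (iteratedDeriv (n - m) f t) (Set.Ici t) t := by
          intro t ht
          have h1 : t ∈ Set.Ioo (-a) a := hsub ⟨ht.1, le_of_lt ht.2⟩
          have h2 := (hsmooth (n - (m + 1)) t h1).hasDerivAt
          have h3 : iteratedDeriv (n - m) f t = deriv (iteratedDeriv (n - (m + 1)) f) t := by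
            rw [show n - m = (n - (m + 1)) + 1 from by omega, iteratedDeriv_succ]
          rw [h3]
          exact h2.hasDerivWithinAt
        have hB : ∀ t : ℝ, HasDerivAt (fun s : ℝ => M * s ^ (m + 1) / ((m + 1).factorial : ℝ))
            (M * t ^ m / (m.factorial : ℝ)) t := by
          intro t
          have h := ((hasDerivAt_pow (m + 1) t).const_mul M).div_const ((m + 1).factorial : ℝ)
          refine h.congr_deriv ?_
          have hf0 : (m.factorial : ℝ) ≠ 0 := Nat.cast_ne_zero.mpr m.factorial_ne_zero
          have hm0 : ((m : ℝ) + 1) ≠ 0 := by positivity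
          rw [Nat.add_sub_cancel, Nat.factorial_succ]
          push_cast
          field_simp
        have h0 : ‖iteratedDeriv (n - (m + 1)) f 0‖ ≤ M * (0 : ℝ) ^ (m + 1) / ((m + 1).factorial : ℝ) := by
          rw [hinit _ (by omega)]
          simp
        have hbound : ∀ t ∈ Set.Ico (0 : ℝ) δ,
            ‖iteratedDeriv (n - m) f t‖ ≤ M * t ^ m / (m.factorial : ℝ) :=
          fun t ht => ih hm' t ⟨ht.1, le_of_lt ht.2⟩
        exact image_norm_le_of_norm_deriv_right_le_deriv_boundary hcont hder h0 hB hbound hx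
  -- maximum of the n-th derivative
  have hcontn : ContinuousOn (fun t => ‖iteratedDeriv n f t‖) (Set.Icc 0 δ) :=
    fun t ht => (((hsmooth n t (hsub ht)).continuousAt).norm).continuousWithinAt
  obtain ⟨x₀, hx₀, hmax⟩ := isCompact_Icc.exists_isMaxOn (Set.nonempty_Icc.2 (le_of_lt hδ)) hcontn
  set M := ‖iteratedDeriv n f x₀‖ with hMdef
  have hMnn : 0 ≤ M := norm_nonneg _
  have hM : ∀ t ∈ Set.Icc (0 : ℝ) δ, ‖iteratedDeriv n f t‖ ≤ M := fun t ht => hmax ht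
  -- the factorial sum bound
  have hsum : (∑ k ∈ Finset.range n, (1 / ((n - k).factorial : ℝ))) ≤ 2 := by
    have h1 : (∑ k ∈ Finset.range n, (1 / ((n - k).factorial : ℝ)))
        = ∑ j ∈ Finset.range n, (1 / ((j + 1).factorial : ℝ)) := by
      rw [← Finset.sum_range_reflect (fun j => (1 / ((j + 1).factorial : ℝ))) n]
      refine Finset.sum_congr rfl fun j hj => ?_
      have hj' := Finset.mem_range.1 hj
      rw [show n - 1 - j + 1 = n - j from by omega]
    rw [h1]
    calc ∑ j ∈ Finset.range n, (1 / ((j + 1).factorial : ℝ))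
        ≤ ∑ j ∈ Finset.range n, (1 / 2 : ℝ) ^ j := by
          refine Finset.sum_le_sum fun j _ => ?_
          rw [div_pow, one_pow]
          have h2 : ((2 : ℝ)) ^ j ≤ ((j + 1).factorial : ℝ) := by exact_mod_cast two_pow_le_fact j
          exact one_div_le_one_div_of_le (by positivity) h2
      _ ≤ 2 := sum_geometric_two_le n
  -- the main estimate on (0, δ]
  have hstep : ∀ x ∈ Set.Ioc (0 : ℝ) δ, ‖iteratedDeriv n f x‖ ≤ 2 / Real.exp 1 * M := by
    intro x hx
    have hxpos : 0 < x := hx.1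
    have hxIcc : x ∈ Set.Icc (0 : ℝ) δ := ⟨le_of_lt hx.1, hx.2⟩
    have hxI : x ∈ Set.Ioo (-a) a := hsub hxIcc
    have heq := hode x hxI
    have h1 : (x : ℂ) ^ n * iteratedDeriv n f x
        = -∑ k ∈ Finset.range n, c k * (x : ℂ) ^ k * iteratedDeriv k f x :=
      eq_neg_of_add_eq_zero_left heq
    have hterm : ∀ k ∈ Finset.range n,
        ‖c k * (x : ℂ) ^ k * iteratedDeriv k f x‖
          ≤ 1 / Real.exp 1 * M * (x ^ n / ((n - k).factorial : ℝ)) := by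
      intro k hk
      have hk' := Finset.mem_range.1 hk
      have hD := key M hM (n - k) (by omega) x hxIcc
      rw [show n - (n - k) = k from by omega] at hD
      have hxkn : x ^ k * x ^ (n - k) = x ^ n := by rw [← pow_add]; congr 1; omega
      calc ‖c k * (x : ℂ) ^ k * iteratedDeriv k f x‖
          = ‖c k‖ * x ^ k * ‖iteratedDeriv k f x‖ := by
            rw [norm_mul, norm_mul, norm_pow, Complex.norm_real, Real.norm_eq_abs,
              abs_of_pos hxpos]
        _ ≤ 1 / Real.exp 1 * x ^ k * (M * x ^ (n - k) / ((n - k).factorial : ℝ)) := by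
            exact mul_le_mul (mul_le_mul_of_nonneg_right (hc k hk') (by positivity)) hD
              (norm_nonneg _) (by positivity)
        _ = 1 / Real.exp 1 * M * (x ^ n / ((n - k).factorial : ℝ)) := by
            rw [show 1 / Real.exp 1 * x ^ k * (M * x ^ (n - k) / ((n - k).factorial : ℝ))
              = 1 / Real.exp 1 * M * (x ^ k * x ^ (n - k) / ((n - k).factorial : ℝ)) from by
                ring, hxkn]
    have hsum2 : ‖∑ k ∈ Finset.range n, c k * (x : ℂ) ^ k * iteratedDeriv k f x‖
        ≤ 1 / Real.exp 1 * M * x ^ n * 2 := by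
      calc ‖∑ k ∈ Finset.range n, c k * (x : ℂ) ^ k * iteratedDeriv k f x‖
          ≤ ∑ k ∈ Finset.range n, ‖c k * (x : ℂ) ^ k * iteratedDeriv k f x‖ :=
            norm_sum_le _ _
        _ ≤ ∑ k ∈ Finset.range n, 1 / Real.exp 1 * M * (x ^ n / ((n - k).factorial : ℝ)) :=
            Finset.sum_le_sum hterm
        _ = 1 / Real.exp 1 * M * x ^ n * ∑ k ∈ Finset.range n, (1 / ((n - k).factorial : ℝ)) := by
            rw [Finset.mul_sum]
            exact Finset.sum_congr rfl fun k _ => by ring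
        _ ≤ 1 / Real.exp 1 * M * x ^ n * 2 := by
            apply mul_le_mul_of_nonneg_left hsum (by positivity)
    have hmain : x ^ n * ‖iteratedDeriv n f x‖ ≤ x ^ n * (2 / Real.exp 1 * M) := by
      calc x ^ n * ‖iteratedDeriv n f x‖
          = ‖(x : ℂ) ^ n * iteratedDeriv n f x‖ := by
            rw [norm_mul, norm_pow, Complex.norm_real, Real.norm_eq_abs, abs_of_pos hxpos]
        _ = ‖∑ k ∈ Finset.range n, c k * (x : ℂ) ^ k * iteratedDeriv k f x‖ := by
            rw [h1, norm_neg]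
        _ ≤ 1 / Real.exp 1 * M * x ^ n * 2 := hsum2
        _ = x ^ n * (2 / Real.exp 1 * M) := by ring
    have hxnpos : (0 : ℝ) < x ^ n := by positivity
    exact le_of_mul_le_mul_left hmain hxnpos
  -- extend the estimate to 0 by continuity
  have h0est : ‖iteratedDeriv n f 0‖ ≤ 2 / Real.exp 1 * M := by
    have htend : Tendsto (fun t => ‖iteratedDeriv n f t‖) (𝓝[>] (0 : ℝ))
        (𝓝 ‖iteratedDeriv n f 0‖) :=
      (((hsmooth n 0 (hsub ⟨le_refl 0, le_of_lt hδ⟩)).continuousAt).norm).continuousWithinAt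
    refine le_of_tendsto htend ?_
    filter_upwards [Ioc_mem_nhdsGT_of_mem ⟨le_refl (0 : ℝ), hδ⟩] with t ht using hstep t ht
  have hM2 : ∀ t ∈ Set.Icc (0 : ℝ) δ, ‖iteratedDeriv n f t‖ ≤ 2 / Real.exp 1 * M := by
    intro t ht
    rcases eq_or_lt_of_le ht.1 with h | h
    · rw [← h]; exact h0est
    · exact hstep t ⟨h, ht.2⟩
  have hMzero : M = 0 := by
    have h' := hM2 x₀ hx₀
    rw [← hMdef] at h'
    have he : (2 : ℝ) < Real.exp 1 := by
      have := Real.exp_one_gt_d9; linarith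
    have hepos : (0 : ℝ) < Real.exp 1 := Real.exp_pos 1
    have h2 : M * Real.exp 1 ≤ 2 * M := by
      calc M * Real.exp 1 ≤ (2 / Real.exp 1 * M) * Real.exp 1 :=
            mul_le_mul_of_nonneg_right h' (le_of_lt hepos)
        _ = 2 * M := by field_simp
    nlinarith
  -- conclude
  intro x hx
  have h := key M hM n (le_refl n) x hx
  rw [Nat.sub_self, iteratedDeriv_zero, hMzero] at h
  simp only [zero_mul, zero_div] at h
  exact norm_le_zero_iff.mp h

/-- Example (Cauchy–Euler equations, Pan–Wang): for constant coefficients with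
`|a_k| ≤ 1/e`, any smooth solution of `xⁿ f⁽ⁿ⁾ + ∑_{k<n} a_k xᵏ f⁽ᵏ⁾ = 0` on `(-a, a)`
with vanishing initial data `f(0) = ⋯ = f⁽ⁿ⁻¹⁾(0) = 0` vanishes near `0`. -/
theorem cauchy_euler_uniqueness
    (n : ℕ) (hn : 2 ≤ n) (a : ℝ) (ha : 0 < a)
    (c : ℕ → ℂ) (hc : ∀ k < n, ‖c k‖ ≤ 1 / Real.exp 1)
    (f : ℝ → ℂ)
    (hsmooth : ∀ k : ℕ, ∀ x ∈ Set.Ioo (-a) a, DifferentiableAt ℝ (iteratedDeriv k f) x)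
    (hode : ∀ x ∈ Set.Ioo (-a) a,
      (x : ℂ) ^ n * iteratedDeriv n f x
        + ∑ k ∈ Finset.range n, c k * (x : ℂ) ^ k * iteratedDeriv k f x = 0)
    (hinit : ∀ k < n, iteratedDeriv k f 0 = 0) :
    ∃ δ > 0, ∀ x ∈ Set.Icc (-δ) δ, f x = 0 := by
  refine ⟨a / 2, by linarith, ?_⟩
  have hpos := cauchy_euler_one_sided n hn a ha c hc f hsmooth hode hinit
  -- the reflected function
  set g : ℝ → ℂ := fun y => f (-y) with hg
  have hgiter : ∀ (k : ℕ) (x : ℝ),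
      iteratedDeriv k g x = (-1 : ℝ) ^ k • iteratedDeriv k f (-x) :=
    fun k x => iteratedDeriv_comp_neg k f x
  have hsmooth_g : ∀ k : ℕ, ∀ x ∈ Set.Ioo (-a) a, DifferentiableAt ℝ (iteratedDeriv k g) x := by
    intro k x hx
    have hfun : iteratedDeriv k g = fun x => (-1 : ℝ) ^ k • iteratedDeriv k f (-x) :=
      funext fun x => hgiter k x
    rw [hfun]
    have hx' : -x ∈ Set.Ioo (-a) a := ⟨by linarith [hx.2], by linarith [hx.1]⟩
    have h1 : DifferentiableAt ℝ (fun x : ℝ => iteratedDeriv k f (-x)) x :=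
      (hsmooth k (-x) hx').comp x (differentiable_neg x)
    exact h1.const_smul ((-1 : ℝ) ^ k)
  have hode_g : ∀ x ∈ Set.Ioo (-a) a,
      (x : ℂ) ^ n * iteratedDeriv n g x
        + ∑ k ∈ Finset.range n, c k * (x : ℂ) ^ k * iteratedDeriv k g x = 0 := by
    intro x hx
    have hx' : -x ∈ Set.Ioo (-a) a := ⟨by linarith [hx.2], by linarith [hx.1]⟩
    have h := hode (-x) hx'
    have e1 : (x : ℂ) ^ n * iteratedDeriv n g x
        = ((-x : ℝ) : ℂ) ^ n * iteratedDeriv n f (-x) := by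
      rw [hgiter, Complex.real_smul]
      push_cast
      ring
    have e2 : ∀ k, c k * (x : ℂ) ^ k * iteratedDeriv k g x
        = c k * ((-x : ℝ) : ℂ) ^ k * iteratedDeriv k f (-x) := by
      intro k
      rw [hgiter, Complex.real_smul]
      push_cast
      ring
    rw [e1, Finset.sum_congr rfl fun k _ => e2 k]
    exact h
  have hinit_g : ∀ k < n, iteratedDeriv k g 0 = 0 := by
    intro k hk
    rw [hgiter, neg_zero, hinit k hk, smul_zero]
  have hneg := cauchy_euler_one_sided n hn a ha c hc g hsmooth_g hode_g hinit_g
  intro x hx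
  rcases le_total 0 x with h | h
  · exact hpos x ⟨h, hx.2⟩
  · have := hneg (-x) ⟨by linarith, by linarith [hx.1]⟩
    simpa [hg] using this
end
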